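/- arXiv:1210.2118 — 12 statements merged into one kernel-verified Lean document; each statement's English description precedes it below -/
import Mathlib

section
/- Let X be a topological space and let λ, μ, κ be nonzero cardinals, and let I = ^λ([μ]^{<κ}) be the set of functions from λ to [μ]^{<κ}. Then X satisfies R(λ,μ;<κ) if and only if for every I-indexed sequence (x_f)_{f∈I} of elements of X there exists ᾱ ∈ λ such that ⋂_{β∈μ} E_{ᾱ,β} ≠ ∅, where E_{α,β} denotes the closure of {x_f : f ∈ I, β ∈ f(α)}. -/
open Cardinal Set Filter

universe u

/-- `X` satisfies `R(λ,μ;<κ)` where the index set `λ` is (the cardinality of) the type `L`: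
for every `L`-indexed sequence of open covers of `X`, each of cardinality `≤ mu`, one can
select subfamilies of cardinality `< kappa` whose union is a cover of `X`. -/
def SatisfiesR (X : Type u) [TopologicalSpace X] (L : Type u) (mu kappa : Cardinal.{u}) : Prop :=
  ∀ U : L → Set (Set X),
    (∀ a, ∀ u ∈ U a, IsOpen u) →
    (∀ a, ⋃₀ U a = Set.univ) →
    (∀ a, #(U a) ≤ mu) →
    ∃ V : L → Set (Set X),
      (∀ a, V a ⊆ U a) ∧ (∀ a, #(V a) < kappa) ∧ ⋃₀ (⋃ a, V a) = Set.univ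

/-- Lemma 1.2 (1)⇔(3): `X` satisfies `R(λ,μ;<κ)` (with `μ = #M`) iff for every sequence
indexed by `I = ^λ([μ]^{<κ})` there is `ᾱ` such that `⋂_{β∈μ} E_{ᾱ,β} ≠ ∅`, where
`E_{α,β}` is the closure of `{x_f : β ∈ f(α)}`. -/
theorem stmt1 (X : Type u) [TopologicalSpace X] (L M : Type u) [Nonempty L] [Nonempty M]
    (kappa : Cardinal.{u}) (hkappa : kappa ≠ 0) :
    SatisfiesR X L (#M) kappa ↔
      ∀ x : (L → {s : Set M // #s < kappa}) → X,
        ∃ a : L,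
          (⋂ b : M, closure (x '' {f | b ∈ (f a : Set M)})).Nonempty := by
  constructor
  · -- forward direction
    intro hR x
    by_contra hcon
    push_neg at hcon
    set C : L → M → Set X := fun a b => closure (x '' {f | b ∈ (f a : Set M)}) with hC
    have hempty : ∀ a, ⋂ b, C a b = ∅ := hcon
    have hcovU : ∀ a, ⋃₀ (range fun b => (C a b)ᶜ) = Set.univ := by
      intro a
      rw [sUnion_range, ← compl_iInter, hempty a, compl_empty]
    have hopenU : ∀ a, ∀ u ∈ (range fun b => (C a b)ᶜ), IsOpen u := by
      rintro a u ⟨b, rfl⟩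
      exact isClosed_closure.isOpen_compl
    have hcardU : ∀ a, #(range fun b => (C a b)ᶜ) ≤ #M := fun a => Cardinal.mk_range_le
    obtain ⟨V, hVsub, hVcard, hVcov⟩ := hR _ hopenU hcovU hcardU
    have hg : ∀ a, ∃ g : ↥(V a) → M, ∀ v : ↥(V a), (C a (g v))ᶜ = ↑v := by
      intro a
      choose g hg using fun v : ↥(V a) => hVsub a v.2
      exact ⟨g, hg⟩
    choose g hg using hg
    have hsf : ∀ a, #(range (g a)) < kappa := fun a =>
      lt_of_le_of_lt Cardinal.mk_range_le (hVcard a)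
    set f₀ : L → {s : Set M // #s < kappa} := fun a => ⟨range (g a), hsf a⟩ with hf₀
    have hx : x f₀ ∈ ⋃₀ (⋃ a, V a) := by rw [hVcov]; exact mem_univ _
    obtain ⟨v, hv, hxv⟩ := hx
    obtain ⟨a, hva⟩ := mem_iUnion.1 hv
    set b : M := g a ⟨v, hva⟩ with hb
    have hveq : (C a b)ᶜ = v := hg a ⟨v, hva⟩
    have hbin : b ∈ (f₀ a : Set M) := ⟨⟨v, hva⟩, rfl⟩
    have hmem : x f₀ ∈ C a b := subset_closure ⟨f₀, hbin, rfl⟩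
    rw [← hveq] at hxv
    exact hxv hmem
  · -- backward direction
    intro hx U hopen hcov hcard
    by_cases hX : IsEmpty X
    · refine ⟨fun _ => ∅, fun a => empty_subset _, fun a => ?_, ?_⟩
      · simp only [Cardinal.mk_emptyCollection]
        exact pos_iff_ne_zero.2 hkappa
      · exact eq_univ_of_forall fun p => (hX.false p).elim
    · rw [not_isEmpty_iff] at hX
      obtain ⟨p₀⟩ := hX
      have hUne : ∀ a, (U a).Nonempty := by
        intro a
        have : p₀ ∈ ⋃₀ U a := by rw [hcov a]; exact mem_univ _
        obtain ⟨u, hu, _⟩ := this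
        exact ⟨u, hu⟩
      have hE : ∀ a, ∃ e : M → Set X, (∀ b, e b ∈ U a) ∧ ∀ u ∈ U a, ∃ b, e b = u := by
        intro a
        have hne : Nonempty ↥(U a) := (hUne a).to_subtype
        obtain ⟨ι⟩ := Cardinal.le_def _ _ |>.1 (hcard a)
        refine ⟨fun b => ↑(Function.invFun ι b), fun b => (Function.invFun ι b).2,
          fun u hu => ⟨ι ⟨u, hu⟩, ?_⟩⟩
        exact congrArg Subtype.val (Function.leftInverse_invFun ι.injective ⟨u, hu⟩)
      choose e he1 he2 using hE
      by_contra hcontra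
      have hP : ∀ f : L → {s : Set M // #s < kappa},
          ∃ p : X, ∀ a, ∀ b ∈ (f a : Set M), p ∉ e a b := by
        intro f
        by_contra hp
        push_neg at hp
        apply hcontra
        refine ⟨fun a => e a '' ↑(f a), ?_, ?_, ?_⟩
        · rintro a u ⟨b, _, rfl⟩
          exact he1 a b
        · intro a
          exact lt_of_le_of_lt Cardinal.mk_image_le (f a).2
        · refine eq_univ_of_forall fun p => ?_
          obtain ⟨a, b, hb, hpb⟩ := hp p
          exact ⟨e a b, mem_iUnion.2 ⟨a, mem_image_of_mem _ hb⟩, hpb⟩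
      choose x hx' using hP
      obtain ⟨a, z, hz⟩ := hx x
      have hzU : z ∈ ⋃₀ U a := by rw [hcov a]; exact mem_univ _
      obtain ⟨u, hu, hzu⟩ := hzU
      obtain ⟨b₀, rfl⟩ := he2 a u hu
      have hzcl : z ∈ closure (x '' {f | b₀ ∈ (f a : Set M)}) := mem_iInter.1 hz b₀
      obtain ⟨p, hp1, hp2⟩ := (mem_closure_iff.1 hzcl) _ (hopen a _ hu) hzu
      obtain ⟨f, hf, rfl⟩ := hp2
      exact hx' f a b₀ hf hp1
end

section
/- Let μ and κ be infinite cardinals, λ a nonzero cardinal, and I = ^λ([μ]^{<κ}) the set of functions from λ to [μ]^{<κ}. If a topological space X satisfies R(λ,μ;<κ), then for every I-indexed sequence (x_f)_{f∈I} of elements of X there exists ᾱ ∈ λ such that ⋂_{s∈[μ]^{<ω}} C_{ᾱ,s} ≠ ∅, where C_{α,s} denotes the closure of {x_f : f ∈ I, s ⊆ f(α)} and [μ]^{<ω} is the set of finite subsets of μ. -/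
open Cardinal Set Filter

universe u

/-- Theorem 1.3 (1)⇒(2): if `X` satisfies `R(λ,μ;<κ)` (`μ = #M` infinite, `κ` infinite),
then for every sequence indexed by `I = ^λ([μ]^{<κ})` there is `ᾱ` such that
`⋂_{s∈[μ]^{<ω}} C_{ᾱ,s} ≠ ∅`, where `C_{α,s}` is the closure of `{x_f : s ⊆ f(α)}`. -/
theorem stmt2 (X : Type u) [TopologicalSpace X] (L M : Type u) [Nonempty L] [Infinite M]
    (kappa : Cardinal.{u}) (hkappa : ℵ₀ ≤ kappa)
    (hR : SatisfiesR X L (#M) kappa) :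
    ∀ x : (L → {s : Set M // #s < kappa}) → X,
      ∃ a : L,
        (⋂ s : Finset M, closure (x '' {f | (s : Set M) ⊆ (f a : Set M)})).Nonempty := by
  intro x
  by_contra h
  push_neg at h
  set C : L → Finset M → Set X :=
    fun a s => closure (x '' {f | (s : Set M) ⊆ (f a : Set M)}) with hCdef
  set U : L → Set (Set X) := fun a => Set.range (fun s : Finset M => (C a s)ᶜ) with hUdef
  have hopen : ∀ a, ∀ u ∈ U a, IsOpen u := by
    rintro a u ⟨s, rfl⟩
    exact isClosed_closure.isOpen_compl
  have hcov : ∀ a, ⋃₀ U a = Set.univ := by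
    intro a
    rw [Set.sUnion_range]
    ext p
    simp only [mem_iUnion, mem_compl_iff, mem_univ, iff_true]
    by_contra hp
    push_neg at hp
    exact Set.eq_empty_iff_forall_notMem.mp (h a) p (Set.mem_iInter.2 hp)
  have hcard : ∀ a, #(U a) ≤ #M := by
    intro a
    calc #(U a) ≤ #(Finset M) := Cardinal.mk_range_le
    _ = #M := Cardinal.mk_finset_of_infinite M
  obtain ⟨V, hVU, hVk, hVcov⟩ := hR U hopen hcov hcard
  -- choose, for each member of V a, a finset witnessing it
  have hchoice : ∀ a, ∀ v : V a, ∃ s : Finset M, (C a s)ᶜ = (v : Set X) := by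
    intro a v
    exact hVU a v.2
  choose S hS using hchoice
  -- define f
  set g : L → Set M := fun a => ⋃ v : V a, ((S a v : Finset M) : Set M) with hgdef
  have hg : ∀ a, #(g a) < kappa := by
    intro a
    rcases lt_or_ge (#(V a)) ℵ₀ with hfin | hinf
    · have : Finite (V a) := Cardinal.lt_aleph0_iff_finite.mp hfin
      have hfin2 : (g a).Finite := Set.finite_iUnion fun v => (S a v).finite_toSet
      haveI := hfin2.to_subtype
      exact lt_of_lt_of_le (Cardinal.lt_aleph0_of_finite (g a)) hkappa
    · have hk : ℵ₀ < kappa := lt_of_le_of_lt hinf (hVk a)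
      have hle : #(g a) ≤ #(V a) * ℵ₀ := by
        refine le_trans (Cardinal.mk_iUnion_le _) ?_
        refine mul_le_mul_right ?_ _
        exact ciSup_le' fun v => le_of_lt (Cardinal.lt_aleph0_of_finite _)
      exact lt_of_le_of_lt hle (Cardinal.mul_lt_of_lt hkappa (hVk a) hk)
  set f : L → {s : Set M // #s < kappa} := fun a => ⟨g a, hg a⟩ with hfdef
  have hx : x f ∈ ⋃₀ ⋃ a, V a := hVcov ▸ Set.mem_univ _
  obtain ⟨v, hv, hxv⟩ := hx
  obtain ⟨a, hva⟩ := Set.mem_iUnion.mp hv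
  have hEq : (C a (S a ⟨v, hva⟩))ᶜ = v := hS a ⟨v, hva⟩
  have hsub : ((S a ⟨v, hva⟩ : Finset M) : Set M) ⊆ (f a : Set M) := by
    intro m hm
    exact Set.mem_iUnion.2 ⟨⟨v, hva⟩, hm⟩
  have : x f ∈ C a (S a ⟨v, hva⟩) :=
    subset_closure ⟨f, hsub, rfl⟩
  rw [← hEq] at hxv
  exact hxv this
end

section
/- Let μ and κ be infinite cardinals, λ a nonzero cardinal, and I = ^λ([μ]^{<κ}) the set of functions from λ to [μ]^{<κ}. Suppose a topological space X has the property that for every I-indexed sequence (x_f)_{f∈I} of elements of X there exists ᾱ ∈ λ such that ⋂_{s∈[μ]^{<ω}} C_{ᾱ,s} ≠ ∅, where C_{α,s} is the closure of {x_f : f ∈ I, s ⊆ f(α)} and [μ]^{<ω} is the set of finite subsets of μ. Then for every I-indexed sequence (x_f)_{f∈I} of elements of X there exists a functionally regular ultrafilter D over I such that the sequence has a D-limit point in X. -/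
open Cardinal Set Filter Topology

universe u

/-- `p` is an `F`-limit point of the sequence `x`. -/
def IsFLimit {I X : Type u} [TopologicalSpace X] (F : Filter I) (x : I → X) (p : X) : Prop :=
  ∀ U : Set X, IsOpen U → p ∈ U → {i | x i ∈ U} ∈ F

/-- An ultrafilter `D` over `I = ^λ([μ]^{<κ})` (functions from `L` to subsets of `M` of
cardinality `< kappa`) is functionally regular if there is `a : L` such that
`{f | b ∈ f a} ∈ D` for every `b : M`. -/
def FunReg {L M : Type u} (kappa : Cardinal.{u})
    (D : Ultrafilter (L → {s : Set M // #s < kappa})) : Prop :=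
  ∃ a : L, ∀ b : M, {f : L → {s : Set M // #s < kappa} | b ∈ (f a : Set M)} ∈ D

/-- Theorem 1.3 (2)⇒(3): `μ = #M` and `κ` infinite. If for every sequence indexed by
`I = ^λ([μ]^{<κ})` there is `ᾱ` with `⋂_{s∈[μ]^{<ω}} C_{ᾱ,s} ≠ ∅`, then every such
sequence has a `D`-limit point for some functionally regular ultrafilter `D` over `I`. -/
theorem stmt3 (X : Type u) [TopologicalSpace X] (L M : Type u) [Nonempty L] [Infinite M]
    (kappa : Cardinal.{u}) (hkappa : ℵ₀ ≤ kappa)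
    (h : ∀ x : (L → {s : Set M // #s < kappa}) → X,
      ∃ a : L,
        (⋂ s : Finset M, closure (x '' {f | (s : Set M) ⊆ (f a : Set M)})).Nonempty) :
    ∀ x : (L → {s : Set M // #s < kappa}) → X,
      ∃ D : Ultrafilter (L → {s : Set M // #s < kappa}),
        FunReg kappa D ∧ ∃ p : X, IsFLimit (D : Filter _) x p := by
  classical
  intro x
  obtain ⟨a, p, hp⟩ := h x
  set F : Filter (L → {s : Set M // #s < kappa}) :=
    Filter.comap x (𝓝 p) ⊓
      ⨅ s : Finset M, 𝓟 {f : L → {s : Set M // #s < kappa} | (s : Set M) ⊆ (f a : Set M)}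
    with hF
  have hdir : Directed (· ≥ ·)
      (fun s : Finset M =>
        (𝓟 {f : L → {s : Set M // #s < kappa} | (s : Set M) ⊆ (f a : Set M)} :
          Filter (L → {s : Set M // #s < kappa}))) := by
    intro s t
    refine ⟨s ∪ t, principal_mono.mpr fun f hf b hb => hf ?_,
      principal_mono.mpr fun f hf b hb => hf ?_⟩
    · exact Finset.mem_coe.mpr (Finset.mem_union_left _ (Finset.mem_coe.mp hb))
    · exact Finset.mem_coe.mpr (Finset.mem_union_right _ (Finset.mem_coe.mp hb))
  have hne : F.NeBot := by
    rw [← forall_mem_nonempty_iff_neBot]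
    intro t ht
    rw [hF, mem_inf_iff] at ht
    obtain ⟨t1, ht1, t2, ht2, rfl⟩ := ht
    rw [mem_comap] at ht1
    obtain ⟨U, hU, hU1⟩ := ht1
    rw [mem_iInf_of_directed hdir] at ht2
    obtain ⟨s, hs⟩ := ht2
    rw [mem_principal] at hs
    have hp' : p ∈ closure (x '' {f | (s : Set M) ⊆ (f a : Set M)}) := mem_iInter.mp hp s
    rw [mem_closure_iff_nhds] at hp'
    obtain ⟨y, hyU, f, hf, rfl⟩ := hp' U hU
    exact ⟨f, hU1 hyU, hs hf⟩
  refine ⟨Ultrafilter.of F, ⟨a, fun b => ?_⟩, p, fun U hUo hpU => ?_⟩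
  · apply Ultrafilter.of_le F
    have : {f : L → {s : Set M // #s < kappa} | (({b} : Finset M) : Set M) ⊆ (f a : Set M)} ∈ F := by
      apply mem_inf_of_right
      exact mem_iInf_of_mem ({b} : Finset M) (by simp [mem_principal])
    refine mem_of_superset this ?_
    intro f hf
    simpa using hf
  · apply Ultrafilter.of_le F
    exact mem_inf_of_left (preimage_mem_comap (hUo.mem_nhds hpU))
end

section
/- Let μ and κ be infinite cardinals, λ a nonzero cardinal, and I = ^λ([μ]^{<κ}) the set of functions from λ to [μ]^{<κ}. If a topological space X has the property that for every I-indexed sequence (x_f)_{f∈I} of elements of X there exists a functionally regular ultrafilter D over I such that the sequence has a D-limit point in X, then X satisfies R(λ,μ;<κ). -/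
open Cardinal Set Filter

universe u

/-- Theorem 1.3 (3)⇒(1): `μ = #M` and `κ` infinite. If every sequence indexed by
`I = ^λ([μ]^{<κ})` has a `D`-limit point for some functionally regular ultrafilter `D`
over `I`, then `X` satisfies `R(λ,μ;<κ)`. -/
theorem stmt4 (X : Type u) [TopologicalSpace X] (L M : Type u) [Nonempty L] [Infinite M]
    (kappa : Cardinal.{u}) (hkappa : ℵ₀ ≤ kappa)
    (h : ∀ x : (L → {s : Set M // #s < kappa}) → X,
      ∃ D : Ultrafilter (L → {s : Set M // #s < kappa}),
        FunReg kappa D ∧ ∃ p : X, IsFLimit (D : Filter _) x p) :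
    SatisfiesR X L (#M) kappa := by
  intro U hopen hcov hcard
  by_cases hX : Nonempty X
  · have hUne : ∀ a, (U a).Nonempty := by
      intro a
      obtain ⟨x⟩ := hX
      have hx : x ∈ ⋃₀ U a := (hcov a).symm ▸ Set.mem_univ x
      obtain ⟨w, hw, -⟩ := hx
      exact ⟨w, hw⟩
    haveI : ∀ a, Nonempty (U a) := fun a => (hUne a).to_subtype
    have emb : ∀ a, (U a) ↪ M := fun a => ((Cardinal.le_def _ _).mp (hcard a)).some
    set u : ∀ a : L, M → Set X := fun a b => ((Function.invFun (⇑(emb a)) b : U a) : Set X) with hu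
    have husub : ∀ a b, u a b ∈ U a := fun a b => (Function.invFun (⇑(emb a)) b : U a).2
    by_cases hdone : ∃ f : L → {s : Set M // #s < kappa},
        (⋃ a, ⋃ b ∈ (f a : Set M), u a b) = Set.univ
    · obtain ⟨f, hf⟩ := hdone
      refine ⟨fun a => u a '' (f a : Set M), ?_, ?_, ?_⟩
      · rintro a _ ⟨b, -, rfl⟩
        exact husub a b
      · intro a
        exact lt_of_le_of_lt Cardinal.mk_image_le (f a).2
      · rw [Set.sUnion_iUnion]
        simp_rw [Set.sUnion_image]
        exact hf
    · push_neg at hdone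
      have hpt : ∀ f : L → {s : Set M // #s < kappa},
          ∃ p : X, p ∉ ⋃ a, ⋃ b ∈ (f a : Set M), u a b := by
        intro f
        exact (Set.ne_univ_iff_exists_notMem _).mp (hdone f)
      choose x hx using hpt
      obtain ⟨D, ⟨a0, ha0⟩, p, hp⟩ := h x
      have hpmem : p ∈ ⋃₀ U a0 := (hcov a0).symm ▸ Set.mem_univ p
      obtain ⟨w, hw, hpw⟩ := hpmem
      obtain ⟨b, hb⟩ := Function.invFun_surjective (f := ⇑(emb a0)) (emb a0).injective ⟨w, hw⟩
      have hub : u a0 b = w := congrArg Subtype.val hb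
      have h1 : {f | x f ∈ u a0 b} ∈ (D : Filter _) :=
        hp (u a0 b) (hub ▸ hopen a0 w hw) (hub ▸ hpw)
      have h2 : {f : L → {s : Set M // #s < kappa} | b ∈ (f a0 : Set M)} ∈ (D : Filter _) :=
        ha0 b
      obtain ⟨f, hf1, hf2⟩ := Filter.nonempty_of_mem (Filter.inter_mem h1 h2)
      exact absurd (Set.mem_iUnion.2 ⟨a0, Set.mem_iUnion₂.2 ⟨b, hf2, hf1⟩⟩) (hx f)
  · refine ⟨fun _ => ∅, fun a => Set.empty_subset _, fun a => ?_, ?_⟩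
    · simpa using lt_of_lt_of_le Cardinal.aleph0_pos hkappa
    · ext x
      exact absurd ⟨x⟩ hX
end

section
/- Let μ and κ be infinite cardinals, λ a nonzero cardinal, I = ^λ([μ]^{<κ}), and let X = ∏_{j∈J} X_j be a product of nonempty topological spaces. Then X satisfies R(λ,μ;<κ) if and only if every subproduct ∏_{j∈J'} X_j with J' ⊆ J and |J'| ≤ 2^{2^{|I|}} satisfies R(λ,μ;<κ). -/
open Cardinal Set Filter Topology

universe u

/-- `R` passes to continuous surjective images. -/
lemma satisfiesR_of_continuous_surjective {X Y : Type u} [TopologicalSpace X]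
    [TopologicalSpace Y] {q : X → Y} (hc : Continuous q) (hs : Function.Surjective q)
    {L : Type u} {mu kappa : Cardinal.{u}} (h : SatisfiesR X L mu kappa) :
    SatisfiesR Y L mu kappa := by
  intro U hop hcov hcard
  obtain ⟨V', hsub, hsm, hcov'⟩ := h (fun a => (fun v => q ⁻¹' v) '' U a)
    (by rintro a _ ⟨v, hv, rfl⟩; exact (hop a v hv).preimage hc)
    (by
      intro a
      apply eq_univ_of_forall
      intro x
      have hx : q x ∈ ⋃₀ U a := (hcov a).symm ▸ mem_univ (q x)
      obtain ⟨v, hv, hxv⟩ := hx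
      exact ⟨q ⁻¹' v, ⟨v, hv, rfl⟩, hxv⟩)
    (fun a => mk_image_le.trans (hcard a))
  refine ⟨fun a => {v | v ∈ U a ∧ q ⁻¹' v ∈ V' a}, fun a v hv => hv.1, fun a => ?_, ?_⟩
  · refine (mk_le_of_injective (f := fun v : ↥{v | v ∈ U a ∧ q ⁻¹' v ∈ V' a} =>
      (⟨q ⁻¹' ↑v, v.2.2⟩ : ↥(V' a))) ?_).trans_lt (hsm a)
    intro v w hvw
    exact Subtype.ext (hs.preimage_injective (congrArg Subtype.val hvw))
  · apply eq_univ_of_forall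
    intro z
    obtain ⟨xx, rfl⟩ := hs z
    have hx : xx ∈ ⋃₀ ⋃ a, V' a := hcov'.symm ▸ mem_univ xx
    obtain ⟨t, ht, hxt⟩ := hx
    obtain ⟨a, hta⟩ := mem_iUnion.mp ht
    obtain ⟨v, hv, rfl⟩ := hsub a hta
    exact ⟨v, mem_iUnion.mpr ⟨a, ⟨hv, hta⟩⟩, hxt⟩

/-- Key lemma: if `Z` satisfies `R`, then any `I`-indexed family of points in `Z`
(`I = ^L([M]^{<κ})`) has, for some `a₀ : L`, a point clustering all constraint sets. -/
lemma lemA {Z : Type u} [TopologicalSpace Z] {L M : Type u} [Infinite M]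
    {kappa : Cardinal.{u}} (hkappa : ℵ₀ ≤ kappa)
    (hZ : SatisfiesR Z L (#M) kappa)
    (y : (L → {s : Set M // #s < kappa}) → Z) :
    ∃ (a₀ : L) (z : Z), ∀ e : Finset M,
      z ∈ closure (y '' {f | (↑e : Set M) ⊆ ↑(f a₀)}) := by
  obtain ⟨d⟩ : Nonempty (M ≃ Finset M) := Cardinal.eq.mp (mk_finset_of_infinite M).symm
  set w : L → M → Set Z :=
    fun a m => (closure (y '' {f | (↑(d m) : Set M) ⊆ ↑(f a)}))ᶜ with hw
  by_cases hcov : ∀ a, ⋃₀ (range (w a)) = Set.univ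
  · exfalso
    obtain ⟨V, hVsub, hVsm, hVcov⟩ := hZ (fun a => range (w a))
      (by rintro a _ ⟨m, rfl⟩; exact isClosed_closure.isOpen_compl)
      hcov (fun a => mk_range_le)
    have hsel : ∀ a, ∃ s : Set M, #s < kappa ∧ ∀ v ∈ V a, ∃ m ∈ s, w a m = v := by
      intro a
      refine ⟨range (fun v : ↥(V a) => (hVsub a v.2).choose),
        mk_range_le.trans_lt (hVsm a), ?_⟩
      intro v hv
      exact ⟨_, mem_range_self (⟨v, hv⟩ : ↥(V a)), (hVsub a hv).choose_spec⟩
    choose s hs1 hs2 using hsel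
    have hgsize : ∀ a, #(↥(⋃ m ∈ s a, (↑(d m) : Set M))) < kappa := by
      intro a
      rcases lt_or_ge #(s a) ℵ₀ with hfin | hinf
      · have hfin' : (⋃ m ∈ s a, (↑(d m) : Set M)).Finite :=
          Set.Finite.biUnion (lt_aleph0_iff_set_finite.mp hfin)
            (fun m _ => (d m).finite_toSet)
        exact hfin'.lt_aleph0.trans_le hkappa
      · have h1 := Cardinal.mk_biUnion_le (fun m => ((d m : Finset M) : Set M)) (s a)
        have h2 : ⨆ m : ↥(s a), #(↥((d m.1 : Finset M) : Set M)) ≤ ℵ₀ :=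
          ciSup_le' fun m => ((d m.1).finite_toSet.lt_aleph0).le
        have h4 : #(↥(s a)) * ℵ₀ < kappa := by
          rw [mul_eq_max hinf le_rfl, max_eq_left hinf]
          exact hs1 a
        exact (h1.trans (mul_le_mul_right h2 _)).trans_lt h4
    set g : L → {s : Set M // #s < kappa} :=
      fun a => ⟨⋃ m ∈ s a, (↑(d m) : Set M), hgsize a⟩ with hg
    have hyg : y g ∈ ⋃₀ ⋃ a, V a := hVcov.symm ▸ mem_univ (y g)
    obtain ⟨t, ht, hyt⟩ := hyg
    obtain ⟨a, hta⟩ := mem_iUnion.mp ht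
    obtain ⟨m, hm, rfl⟩ := hs2 a t hta
    refine hyt (subset_closure ⟨g, ?_, rfl⟩)
    intro xx hxx
    exact mem_biUnion hm hxx
  · push_neg at hcov
    obtain ⟨a₀, ha₀⟩ := hcov
    have hz : ∃ z, z ∉ ⋃₀ range (w a₀) := by
      by_contra h
      push_neg at h
      exact ha₀ (eq_univ_of_forall h)
    obtain ⟨z, hz⟩ := hz
    refine ⟨a₀, z, fun e => ?_⟩
    have hz' : z ∉ w a₀ (d.symm e) := fun h => hz ⟨w a₀ (d.symm e), mem_range_self _, h⟩
    simp only [hw, mem_compl_iff, not_not] at hz'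
    rwa [Equiv.apply_symm_apply] at hz'

/-- From a cluster point, produce an ultrafilter that is fine at `a₀` and along which
the family converges. -/
lemma exists_ultra {Z : Type u} [TopologicalSpace Z] {L M : Type u}
    {kappa : Cardinal.{u}}
    (y : (L → {s : Set M // #s < kappa}) → Z) (a₀ : L) (z : Z)
    (hcl : ∀ e : Finset M, z ∈ closure (y '' {f | (↑e : Set M) ⊆ ↑(f a₀)})) :
    ∃ W : Ultrafilter (L → {s : Set M // #s < kappa}),
      (∀ m : M, {f | m ∈ (↑(f a₀) : Set M)} ∈ W) ∧ Tendsto y (↑W) (𝓝 z) := by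
  set F : Finset M → Filter (L → {s : Set M // #s < kappa}) :=
    fun e => 𝓟 {f | (↑e : Set M) ⊆ ↑(f a₀)} ⊓ comap y (𝓝 z) with hF
  have hne : ∀ e, (F e).NeBot := by
    intro e
    rw [← forall_mem_nonempty_iff_neBot]
    intro t ht
    rw [hF, mem_inf_iff] at ht
    obtain ⟨t₁, ht₁, t₂, ht₂, rfl⟩ := ht
    obtain ⟨v, hv, hvt⟩ := mem_comap.mp ht₂
    obtain ⟨zz, hzv, f, hfS, rfl⟩ := mem_closure_iff_nhds.mp (hcl e) v hv
    exact ⟨f, mem_principal.mp ht₁ hfS, hvt hzv⟩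
  haveI := Classical.decEq M
  have hdir : Directed (· ≥ ·) F := by
    intro e₁ e₂
    refine ⟨e₁ ∪ e₂, inf_le_inf_right _ (principal_mono.mpr ?_),
      inf_le_inf_right _ (principal_mono.mpr ?_)⟩
    · intro f hf xx hxx
      apply hf
      rw [Finset.coe_union]
      exact Set.mem_union_left _ hxx
    · intro f hf xx hxx
      apply hf
      rw [Finset.coe_union]
      exact Set.mem_union_right _ hxx
  haveI : Nonempty (Finset M) := ⟨∅⟩
  haveI hGne : (⨅ e, F e).NeBot := iInf_neBot_of_directed' hdir hne
  refine ⟨Ultrafilter.of (⨅ e, F e), ?_, ?_⟩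
  · intro m
    have h1 : ↑(Ultrafilter.of (⨅ e, F e)) ≤ F {m} :=
      (Ultrafilter.of_le _).trans (iInf_le F {m})
    have h2 : {f : L → {s : Set M // #s < kappa} | m ∈ (↑(f a₀) : Set M)} ∈ F {m} := by
      rw [hF]
      apply mem_of_superset (mem_inf_of_left (mem_principal_self _))
      intro f hf
      exact hf (by simp)
    rw [← Ultrafilter.mem_coe]
    exact h1 h2
  · have h1 : ↑(Ultrafilter.of (⨅ e, F e)) ≤ comap y (𝓝 z) :=
      (Ultrafilter.of_le _).trans ((iInf_le F ∅).trans inf_le_right)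
    exact tendsto_iff_comap.mpr h1

lemma mk_ultrafilter_le (I : Type u) : #(Ultrafilter I) ≤ 2 ^ ((2 : Cardinal.{u}) ^ #I) := by
  have h : #(Ultrafilter I) ≤ #(Set (Set I)) := by
    apply mk_le_of_injective (f := fun W : Ultrafilter I => {s : Set I | s ∈ W})
    intro W₁ W₂ hW
    apply Ultrafilter.coe_injective
    apply Filter.ext
    intro s
    rw [Ultrafilter.mem_coe, Ultrafilter.mem_coe]
    exact Set.ext_iff.mp hW s
  calc #(Ultrafilter I) ≤ #(Set (Set I)) := h
    _ = 2 ^ ((2 : Cardinal.{u}) ^ #I) := by rw [mk_set, mk_set]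

/-- Corollary 1.5 (1)⇔(3): a product satisfies `R(λ,μ;<κ)` (with `μ = #M` infinite and
`κ` infinite) iff every subproduct with at most `2^(2^|I|)` factors does, where
`I = ^λ([μ]^{<κ})`. -/
theorem stmt8 (L M : Type u) [Nonempty L] [Infinite M]
    (kappa : Cardinal.{u}) (hkappa : ℵ₀ ≤ kappa)
    (J : Type u) (X : J → Type u) [∀ j, TopologicalSpace (X j)] [∀ j, Nonempty (X j)] :
    SatisfiesR (∀ j, X j) L (#M) kappa ↔
      ∀ J' : Set J,
        #J' ≤ (2 : Cardinal.{u}) ^ ((2 : Cardinal.{u}) ^ #(L → {s : Set M // #s < kappa})) →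
        SatisfiesR (∀ j : J', X j) L (#M) kappa := by
  constructor
  · intro h J' _
    classical
    have hsurj : Function.Surjective (fun (x : ∀ j, X j) (j : J') => x j) := by
      intro yv
      refine ⟨fun j => if hj : j ∈ J' then yv ⟨j, hj⟩ else Classical.arbitrary (X j), ?_⟩
      funext j
      exact dif_pos j.2
    exact satisfiesR_of_continuous_surjective
      (continuous_pi fun j => continuous_apply _) hsurj h
  · intro hsub U hop hcov hcard
    classical
    by_contra hcon
    -- enumerate the covers by `M`
    have henum : ∀ a, ∃ u : M → Set (∀ j, X j),
        (∀ m, u m ∈ U a) ∧ ∀ v ∈ U a, ∃ m, u m = v := by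
      intro a
      have hne : (U a).Nonempty := by
        obtain ⟨xx⟩ : Nonempty (∀ j, X j) := inferInstance
        have hx : xx ∈ ⋃₀ U a := (hcov a).symm ▸ mem_univ xx
        obtain ⟨v, hv, _⟩ := hx
        exact ⟨v, hv⟩
      obtain ⟨emb⟩ : Nonempty (↥(U a) ↪ M) := (Cardinal.le_def _ _).mp (hcard a)
      refine ⟨fun m => if h : ∃ v : ↥(U a), emb v = m then ↑h.choose else hne.choose,
        ?_, ?_⟩
      · intro m
        by_cases h : ∃ v : ↥(U a), emb v = m
        · simpa [h] using h.choose.2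
        · simpa [h] using hne.choose_spec
      · intro v hv
        refine ⟨emb ⟨v, hv⟩, ?_⟩
        have h : ∃ v' : ↥(U a), emb v' = emb ⟨v, hv⟩ := ⟨⟨v, hv⟩, rfl⟩
        simp only [dif_pos h]
        exact congrArg Subtype.val (emb.injective h.choose_spec)
    choose u hu1 hu2 using henum
    haveI : Nonempty {s : Set M // #s < kappa} :=
      ⟨⟨∅, by rw [mk_emptyCollection]; exact aleph0_pos.trans_le hkappa⟩⟩
    -- failure points
    have hx : ∀ f : L → {s : Set M // #s < kappa}, ∃ x : ∀ j, X j,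
        ∀ a, ∀ m ∈ (↑(f a) : Set M), x ∉ u a m := by
      intro f
      by_contra hno
      push_neg at hno
      apply hcon
      refine ⟨fun a => u a '' (↑(f a) : Set M), fun a => ?_, fun a => ?_, ?_⟩
      · rintro _ ⟨m, _, rfl⟩; exact hu1 a m
      · exact mk_image_le.trans_lt (f a).2
      · apply eq_univ_of_forall
        intro xx
        obtain ⟨a, m, hm, hxm⟩ := hno xx
        exact ⟨u a m, mem_iUnion.mpr ⟨a, ⟨m, hm, rfl⟩⟩, hxm⟩
    choose x hxspec using hx
    set HasLim : Ultrafilter (L → {s : Set M // #s < kappa}) → J → Prop :=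
      fun W j => ∃ p, Tendsto (fun f => x f j) (↑W) (𝓝 p) with hHL
    set J' : Set J :=
      Set.range (fun p : {W : Ultrafilter (L → {s : Set M // #s < kappa}) //
        ∃ j, ¬ HasLim W j} => p.2.choose) with hJ'
    have hJ'card : #(↥J') ≤
        (2 : Cardinal.{u}) ^ ((2 : Cardinal.{u}) ^ #(L → {s : Set M // #s < kappa})) :=
      mk_range_le.trans ((mk_subtype_le _).trans (mk_ultrafilter_le _))
    have hY := hsub J' hJ'card
    obtain ⟨a₀, z, hcl⟩ := lemA hkappa hY (fun f (j : J') => x f j)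
    obtain ⟨W, hfine, hz⟩ := exists_ultra _ a₀ z hcl
    have hJ'lim : ∀ j (hj : j ∈ J'), HasLim W j := by
      intro j hj
      exact ⟨z ⟨j, hj⟩, ((continuous_apply (⟨j, hj⟩ : ↥J')).tendsto z).comp hz⟩
    have halllim : ∀ j, HasLim W j := by
      by_contra hbad
      push_neg at hbad
      have hW : ∃ j, ¬ HasLim W j := hbad
      have hmem : hW.choose ∈ J' := ⟨⟨W, hW⟩, rfl⟩
      exact hW.choose_spec (hJ'lim _ hmem)
    choose p hp using halllim
    have hplim : Tendsto x (W : Filter (L → {s : Set M // #s < kappa})) (𝓝 p) :=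
      tendsto_pi_nhds.mpr hp
    have hp2 : p ∈ ⋃₀ U a₀ := (hcov a₀).symm ▸ mem_univ p
    obtain ⟨v, hv, hpv⟩ := hp2
    obtain ⟨m₀, rfl⟩ := hu2 a₀ v hv
    have hnb : u a₀ m₀ ∈ 𝓝 p := (hop a₀ _ hv).mem_nhds hpv
    have hA : x ⁻¹' (u a₀ m₀) ∈ (W : Filter (L → {s : Set M // #s < kappa})) := hplim hnb
    have hB : {f | m₀ ∈ (↑(f a₀) : Set M)} ∈ (W : Filter (L → {s : Set M // #s < kappa})) := by
      rw [Ultrafilter.mem_coe]; exact hfine m₀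
    obtain ⟨f, hf1, hf2⟩ := Filter.nonempty_of_mem (inter_mem hA hB)
    exact hxspec f a₀ m₀ hf2 hf1
end

section
/- Let λ, μ, κ be nonzero cardinals. If for every α ∈ λ, X_α is a nonempty topological space which is not [κ,μ]-compact, then the product X = ∏_{α∈λ} X_α does not satisfy R(λ,μ;<κ). -/
open Cardinal Set Filter

universe u

/-- A space is `[κ,μ]`-compact if every open cover of cardinality `≤ mu` has a subcover
of cardinality `< kappa`. -/
def KMuCompact (X : Type u) [TopologicalSpace X] (kappa mu : Cardinal.{u}) : Prop :=
  ∀ U : Set (Set X), (∀ u ∈ U, IsOpen u) → ⋃₀ U = Set.univ → #U ≤ mu →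
    ∃ V ⊆ U, #V < kappa ∧ ⋃₀ V = Set.univ

/-- Proposition 2.1: if each `X a` (`a` ranging over the nonzero cardinal `λ = #L`) is a
nonempty space which is not `[κ,μ]`-compact, then `∏ a, X a` does not satisfy
`R(λ,μ;<κ)`. -/
theorem stmt9 (L : Type u) [Nonempty L] (mu kappa : Cardinal.{u})
    (hmu : mu ≠ 0) (hkappa : kappa ≠ 0)
    (X : L → Type u) [∀ a, TopologicalSpace (X a)] [∀ a, Nonempty (X a)]
    (h : ∀ a, ¬ KMuCompact (X a) kappa mu) :
    ¬ SatisfiesR (∀ a, X a) L mu kappa := by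
  intro hR
  have hU : ∀ a, ∃ U : Set (Set (X a)), (∀ u ∈ U, IsOpen u) ∧ ⋃₀ U = Set.univ ∧
      #U ≤ mu ∧ ∀ V ⊆ U, #V < kappa → ⋃₀ V ≠ Set.univ := by
    intro a
    have := h a
    unfold KMuCompact at this
    push_neg at this
    obtain ⟨U, h1, h2, h3, h4⟩ := this
    exact ⟨U, h1, h2, h3, fun V hV hc => (h4 V hV hc).elim⟩
  choose U hUopen hUcov hUcard hUnc using hU
  set π : ∀ a, (∀ b, X b) → X a := fun a f => f a with hπ
  have hπs : ∀ a, Function.Surjective (π a) := fun a => Function.surjective_eval a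
  set W : L → Set (Set (∀ b, X b)) := fun a => (fun u => π a ⁻¹' u) '' U a with hW
  obtain ⟨V, hVW, hVcard, hVcov⟩ := hR W
    (by
      rintro a _ ⟨u, hu, rfl⟩
      exact (hUopen a u hu).preimage (continuous_apply a))
    (by
      intro a
      ext f
      simp only [Set.mem_univ, iff_true, Set.mem_sUnion]
      have : f a ∈ ⋃₀ U a := (hUcov a).symm ▸ Set.mem_univ _
      obtain ⟨u, hu, hfu⟩ := this
      exact ⟨π a ⁻¹' u, ⟨u, hu, rfl⟩, hfu⟩)
    (fun a => le_trans (Cardinal.mk_image_le) (hUcard a))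
  -- pull back selections
  set V' : ∀ a, Set (Set (X a)) := fun a => {u | u ∈ U a ∧ π a ⁻¹' u ∈ V a} with hV'
  have hV'card : ∀ a, #(V' a) < kappa := by
    intro a
    refine lt_of_le_of_lt ?_ (hVcard a)
    refine Cardinal.mk_le_of_injective (f := fun u => (⟨π a ⁻¹' u.1, u.2.2⟩ : V a)) ?_
    rintro ⟨u, hu⟩ ⟨v, hv⟩ huv
    have : π a ⁻¹' u = π a ⁻¹' v := congrArg Subtype.val huv
    have := Set.preimage_injective.mpr (hπs a) this
    exact Subtype.ext this
  have hV'ne : ∀ a, ∃ x : X a, x ∉ ⋃₀ V' a := by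
    intro a
    have := hUnc a (V' a) (fun u hu => hu.1) (hV'card a)
    by_contra hc
    push_neg at hc
    exact this (Set.eq_univ_of_forall hc)
  choose x hx using hV'ne
  have : x ∈ ⋃₀ ⋃ a, V a := hVcov.symm ▸ Set.mem_univ _
  obtain ⟨s, hs, hxs⟩ := this
  obtain ⟨a, hsa⟩ := Set.mem_iUnion.mp hs
  obtain ⟨u, hu, rfl⟩ := hVW a hsa
  exact hx a ⟨u, ⟨hu, hsa⟩, hxs⟩
end

section
/- Let μ and κ be infinite cardinals, λ a nonzero cardinal, ν = max{λ, 2^{2^{μ^{<κ}}}} where μ^{<κ} = |[μ]^{<κ}|, and let 𝓕 be a family of nonempty topological spaces. If every product (with repetitions allowed) of at most ν members of 𝓕 satisfies R(λ,μ;<κ), then every product of at most ν members of 𝓕 is [κ,μ]-compact. -/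
open Cardinal Set Filter

universe u

/-- Corollary 2.2 (2)⇒(3): with `λ = #L` nonzero, `μ = #M` and `κ` infinite, and
`ν = max{λ, 2^(2^(μ^{<κ}))}` where `μ^{<κ} = |[μ]^{<κ}|`: if every product (repetitions
allowed) of at most `ν` members of the family `Y` satisfies `R(λ,μ;<κ)`, then every
product of at most `ν` members of `Y` is `[κ,μ]`-compact. -/
theorem stmt10 (L M : Type u) [Nonempty L] [Infinite M]
    (kappa : Cardinal.{u}) (hkappa : ℵ₀ ≤ kappa)
    (J : Type u) (Y : J → Type u) [∀ j, TopologicalSpace (Y j)] [∀ j, Nonempty (Y j)]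
    (nu : Cardinal.{u})
    (hnu : nu = max #L ((2 : Cardinal.{u}) ^ ((2 : Cardinal.{u}) ^ #{s : Set M // #s < kappa})))
    (h : ∀ (K : Type u) (g : K → J), #K ≤ nu → SatisfiesR (∀ k, Y (g k)) L (#M) kappa) :
    ∀ (K : Type u) (g : K → J), #K ≤ nu → KMuCompact (∀ k, Y (g k)) kappa (#M) := by
  -- ν is infinite
  have hnu_inf : ℵ₀ ≤ nu := by
    have h1 : (#M : Cardinal) ≤ #{s : Set M // #s < kappa} := by
      apply Cardinal.mk_le_of_injective (f := fun m =>
        (⟨{m}, by simp; exact lt_of_lt_of_le Cardinal.one_lt_aleph0 hkappa⟩ :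
          {s : Set M // #s < kappa}))
      intro a b hab
      simpa [Set.singleton_eq_singleton_iff] using congrArg Subtype.val hab
    have h2 : #{s : Set M // #s < kappa} ≤ 2 ^ #{s : Set M // #s < kappa} := (Cardinal.cantor _).le
    have h3 : (2:Cardinal.{u}) ^ #{s : Set M // #s < kappa} ≤
        2 ^ ((2:Cardinal.{u}) ^ #{s : Set M // #s < kappa}) :=
      Cardinal.power_le_power_left (by norm_num) h2
    calc ℵ₀ ≤ #M := Cardinal.infinite_iff.mp inferInstance
      _ ≤ _ := h1
      _ ≤ _ := h2.trans h3
      _ ≤ nu := by rw [hnu]; exact le_max_right _ _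
  have hL : #L ≤ nu := by rw [hnu]; exact le_max_left _ _
  intro K g hK C hCopen hCcov hCcard
  by_contra hcon
  push_neg at hcon
  -- the big product P = X^L, as a product of ≤ ν members of Y
  have hLK : #(L × K) ≤ nu := by
    rw [Cardinal.mk_prod, Cardinal.lift_id, Cardinal.lift_id]
    calc #L * #K ≤ max (max #L #K) ℵ₀ := Cardinal.mul_le_max _ _
      _ ≤ nu := max_le (max_le hL hK) hnu_inf
  have hR := h (L × K) (fun q => g q.2) hLK
  -- projections
  let π : L → (∀ q : L × K, Y (g q.2)) → (∀ k, Y (g k)) := fun α p k => p (α, k)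
  have hπcont : ∀ α, Continuous (π α) := fun α =>
    continuous_pi fun k => continuous_apply (α, k)
  have hπsurj : ∀ α, Function.Surjective (π α) := by
    intro α x
    exact ⟨fun q => x q.2, rfl⟩
  have hπinj : ∀ α, Function.Injective (Set.preimage (π α)) := fun α =>
    Set.preimage_injective.mpr (hπsurj α)
  -- the L-indexed covers of P
  have hRsel := hR (fun α => (fun u => π α ⁻¹' u) '' C)
    (by
      rintro α v ⟨u, hu, rfl⟩
      exact (hCopen u hu).preimage (hπcont α))
    (by
      intro α
      ext p
      simp only [Set.mem_sUnion, Set.mem_univ, iff_true]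
      have : π α p ∈ ⋃₀ C := by rw [hCcov]; trivial
      obtain ⟨u, hu, hpu⟩ := this
      exact ⟨π α ⁻¹' u, ⟨u, hu, rfl⟩, hpu⟩)
    (fun α => (Cardinal.mk_image_le).trans hCcard)
  obtain ⟨V, hVsub, hVcard, hVcov⟩ := hRsel
  -- the small selections downstairs
  set Z : L → Set (Set (∀ k, Y (g k))) := fun α => {u ∈ C | π α ⁻¹' u ∈ V α} with hZ
  have hZcard : ∀ α, #(Z α) < kappa := by
    intro α
    refine lt_of_le_of_lt (Cardinal.mk_le_of_injective
      (f := fun (u : Z α) => (⟨π α ⁻¹' u.1, u.2.2⟩ : V α)) ?_) (hVcard α)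
    intro a b hab
    exact Subtype.ext (hπinj α (congrArg Subtype.val hab))
  have hZne : ∀ α, ∃ x : ∀ k, Y (g k), x ∉ ⋃₀ (Z α) := by
    intro α
    have := hcon (Z α) (fun u hu => hu.1) (hZcard α)
    exact Set.ne_univ_iff_exists_notMem _ |>.mp this
  choose x hx using hZne
  -- the uncovered point of P
  set p : ∀ q : L × K, Y (g q.2) := fun q => x q.1 q.2 with hp
  have : p ∈ ⋃₀ (⋃ α, V α) := by rw [hVcov]; trivial
  obtain ⟨v, hv, hpv⟩ := this
  obtain ⟨α, hvα⟩ := Set.mem_iUnion.mp hv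
  obtain ⟨u, hu, rfl⟩ := hVsub α hvα
  exact hx α ⟨u, ⟨hu, hvα⟩, hpv⟩
end

section
/- Let μ and κ be infinite cardinals, λ a nonzero cardinal, and let 𝓕 be a family of nonempty topological spaces. Then all products (with repetitions allowed) of members of 𝓕 satisfy R(λ,μ;<κ) if and only if all products of members of 𝓕 are [κ,μ]-compact, and this holds if and only if all products of members of 𝓕 satisfy R(λ',μ;<κ) for every nonzero cardinal λ'. -/
open Cardinal Set Filter

universe u

lemma kmu_to_R (X : Type u) [TopologicalSpace X] (L : Type u) [Nonempty L]
    (mu kappa : Cardinal.{u}) (hk : 0 < kappa) (h : KMuCompact X kappa mu) :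
    SatisfiesR X L mu kappa := by
  intro U hopen hcov hcard
  obtain ⟨a₀⟩ := ‹Nonempty L›
  obtain ⟨V, hVU, hVcard, hVcov⟩ := h (U a₀) (hopen a₀) (hcov a₀) (hcard a₀)
  classical
  refine ⟨fun a => if a = a₀ then V else ∅, ?_, ?_, ?_⟩
  · intro a u hu
    by_cases ha : a = a₀
    · subst ha; simp only [if_pos rfl] at hu; exact hVU hu
    · simp [ha] at hu
  · intro a
    by_cases ha : a = a₀
    · simp [ha, hVcard]
    · simpa [ha] using hk
  · apply eq_univ_of_univ_subset
    rw [← hVcov]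
    exact sUnion_mono (fun u hu => mem_iUnion.mpr ⟨a₀, by simp [hu]⟩)

lemma R_to_kmu (L M : Type u) [Nonempty L]
    (kappa : Cardinal.{u})
    (J : Type u) (Y : J → Type u) [∀ j, TopologicalSpace (Y j)] [∀ j, Nonempty (Y j)]
    (h : ∀ (K : Type u) (g : K → J), SatisfiesR (∀ k, Y (g k)) L (#M) kappa)
    (K : Type u) (g : K → J) : KMuCompact (∀ k, Y (g k)) kappa (#M) := by
  classical
  intro Uc hopen hcov hcard
  by_contra hno
  push_neg at hno
  let g' : K × L → J := fun p => g p.1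
  let π : L → (∀ p : K × L, Y (g' p)) → (∀ k, Y (g k)) := fun a z k => z (k, a)
  have hπcont : ∀ a, Continuous (π a) := fun a => continuous_pi (fun k => continuous_apply (k, a))
  have hπsurj : ∀ a, Function.Surjective (π a) := fun a x => ⟨fun p => x p.1, rfl⟩
  let Ucov : L → Set (Set (∀ p : K × L, Y (g' p))) := fun a => (fun u => π a ⁻¹' u) '' Uc
  obtain ⟨V, hVsub, hVcard, hVcov⟩ := h (K × L) g' Ucov
    (by rintro a v ⟨u, hu, rfl⟩; exact (hopen u hu).preimage (hπcont a))
    (by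
      intro a
      apply eq_univ_iff_forall.mpr
      intro z
      have : π a z ∈ ⋃₀ Uc := hcov ▸ mem_univ _
      rcases this with ⟨u, hu, hzu⟩
      exact ⟨π a ⁻¹' u, ⟨u, hu, rfl⟩, hzu⟩)
    (fun a => (Cardinal.mk_image_le).trans hcard)
  let W : L → Set (Set (∀ k, Y (g k))) := fun a => {u ∈ Uc | π a ⁻¹' u ∈ V a}
  have hWcard : ∀ a, #(W a) < kappa := by
    intro a
    refine lt_of_le_of_lt ?_ (hVcard a)
    refine Cardinal.mk_le_of_injective
      (f := fun u : W a => (⟨π a ⁻¹' u.1, u.2.2⟩ : V a)) ?_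
    intro u v huv
    apply Subtype.ext
    exact ((hπsurj a).preimage_injective) (congrArg Subtype.val huv)
  have hx : ∀ a, ∃ x : (∀ k, Y (g k)), x ∉ ⋃₀ W a := by
    intro a
    have := hno (W a) (fun u hu => hu.1) (hWcard a)
    exact (ne_univ_iff_exists_notMem _).mp this
  choose x hx using hx
  let z : ∀ p : K × L, Y (g' p) := fun p => x p.2 p.1
  have hz : z ∈ ⋃₀ ⋃ a, V a := hVcov ▸ mem_univ z
  rcases hz with ⟨v, hv, hzv⟩
  rcases mem_iUnion.mp hv with ⟨a, hva⟩
  rcases hVsub a hva with ⟨u, huU, rfl⟩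
  have hπz : π a z = x a := rfl
  exact hx a ⟨u, ⟨huU, hva⟩, by rw [← hπz]; exact hzv⟩

/-- Corollary 2.2 (1)⇔(5)⇔(6): with `λ = #L` nonzero, `μ = #M` and `κ` infinite: all
products (repetitions allowed) of members of the family `Y` satisfy `R(λ,μ;<κ)` iff all
such products are `[κ,μ]`-compact, iff all such products satisfy `R(λ',μ;<κ)` for every
nonzero cardinal `λ'`. -/
theorem stmt11 (L M : Type u) [Nonempty L] [Infinite M]
    (kappa : Cardinal.{u}) (hkappa : ℵ₀ ≤ kappa)
    (J : Type u) (Y : J → Type u) [∀ j, TopologicalSpace (Y j)] [∀ j, Nonempty (Y j)] :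
    ((∀ (K : Type u) (g : K → J), SatisfiesR (∀ k, Y (g k)) L (#M) kappa) ↔
      (∀ (K : Type u) (g : K → J), KMuCompact (∀ k, Y (g k)) kappa (#M)))
    ∧
    ((∀ (K : Type u) (g : K → J), KMuCompact (∀ k, Y (g k)) kappa (#M)) ↔
      (∀ (L' : Type u), Nonempty L' →
        ∀ (K : Type u) (g : K → J), SatisfiesR (∀ k, Y (g k)) L' (#M) kappa)) := by
  have hk0 : (0 : Cardinal.{u}) < kappa := lt_of_lt_of_le aleph0_pos hkappa
  constructor
  · constructor
    · exact fun h K g => R_to_kmu L M kappa J Y h K g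
    · exact fun h K g => kmu_to_R _ L (#M) kappa hk0 (h K g)
  · constructor
    · intro h L' hL' K g
      haveI := hL'
      exact kmu_to_R _ L' (#M) kappa hk0 (h K g)
    · intro h K g
      exact R_to_kmu L M kappa J Y (h L ‹Nonempty L›) K g
end

section
/- Let λ, μ, κ be nonzero cardinals. If a product X = ∏_{j∈J} X_j of nonempty topological spaces satisfies R(λ,μ;<κ), then the set {j ∈ J : X_j is not [κ,μ]-compact} has cardinality strictly less than λ. -/
open Cardinal Set Filter

universe u

/-- If a product of nonempty spaces satisfies `R(λ,μ;<κ)` (`λ = #L`, `μ`, `κ` nonzero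
cardinals), then fewer than `λ` of the factors fail to be `[κ,μ]`-compact. -/
theorem stmt12 (L : Type u) [Nonempty L] (mu kappa : Cardinal.{u})
    (hmu : mu ≠ 0) (hkappa : kappa ≠ 0)
    (J : Type u) (X : J → Type u) [∀ j, TopologicalSpace (X j)] [∀ j, Nonempty (X j)]
    (hR : SatisfiesR (∀ j, X j) L mu kappa) :
    #{j : J | ¬ KMuCompact (X j) kappa mu} < #L := by
  classical
  by_contra hlt
  push_neg at hlt
  obtain ⟨f⟩ := Cardinal.le_def _ _ |>.mp hlt
  set g : L → J := fun a => (f a).1 with hg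
  have hginj : Function.Injective g := fun a b h => f.injective (Subtype.ext h)
  have hbad : ∀ a, ¬ KMuCompact (X (g a)) kappa mu := fun a => (f a).2
  have hU : ∀ a, ∃ U : Set (Set (X (g a))), (∀ u ∈ U, IsOpen u) ∧ ⋃₀ U = Set.univ ∧
      #U ≤ mu ∧ ∀ V ⊆ U, #V < kappa → ⋃₀ V ≠ Set.univ := by
    intro a
    have h := hbad a
    unfold KMuCompact at h
    push_neg at h
    obtain ⟨U, h1, h2, h3, h4⟩ := h
    exact ⟨U, h1, h2, h3, h4⟩
  choose U hUopen hUcov hUcard hUbad using hU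
  set Ucov : L → Set (Set (∀ j, X j)) :=
    fun a => (fun u => (fun x : ∀ j, X j => x (g a)) ⁻¹' u) '' U a with hUcovdef
  obtain ⟨V, hVsub, hVcard, hVcov⟩ := hR Ucov
    (by rintro a _ ⟨u, hu, rfl⟩; exact (hUopen a u hu).preimage (continuous_apply _))
    (by
      intro a
      have : ⋃₀ Ucov a = (fun x : ∀ j, X j => x (g a)) ⁻¹' (⋃₀ U a) := by
        simp [hUcovdef, Set.sUnion_image, Set.preimage_sUnion]
      rw [this, hUcov a, Set.preimage_univ])
    (fun a => (Cardinal.mk_image_le).trans (hUcard a))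
  set W : (a : L) → Set (Set (X (g a))) :=
    fun a => {u ∈ U a | (fun x : ∀ j, X j => x (g a)) ⁻¹' u ∈ V a} with hWdef
  have hex : ∃ a, ⋃₀ W a = Set.univ := by
    by_contra hno
    push_neg at hno
    have hx : ∀ a, ∃ y : X (g a), y ∉ ⋃₀ W a := by
      intro a
      rcases Set.ne_univ_iff_exists_notMem _ |>.mp (hno a) with ⟨y, hy⟩
      exact ⟨y, hy⟩
    choose x hx using hx
    set p : ∀ j, X j := fun j =>
      if h : ∃ a, g a = j then cast (congrArg X h.choose_spec) (x h.choose)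
      else Classical.arbitrary _ with hp
    have key : ∀ a, p (g a) = x a := by
      intro a
      have gen : ∀ (b : L) (hspec : g b = g a), cast (congrArg X hspec) (x b) = x a := by
        intro b hspec
        have hb : b = a := hginj hspec
        subst hb
        exact cast_eq_iff_heq.mpr HEq.rfl
      have h : ∃ b, g b = g a := ⟨a, rfl⟩
      simp only [hp, dif_pos h]
      exact gen h.choose h.choose_spec
    have hpmem : p ∈ ⋃₀ ⋃ a, V a := hVcov ▸ Set.mem_univ p
    obtain ⟨v, hv, hpv⟩ := hpmem
    rw [Set.mem_iUnion] at hv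
    obtain ⟨a, hva⟩ := hv
    obtain ⟨u, hu, rfl⟩ := hVsub a hva
    have : x a ∈ u := by
      have := hpv
      rw [Set.mem_preimage, key a] at this
      exact this
    exact hx a ⟨u, ⟨hu, hva⟩, this⟩
  obtain ⟨a, hWcov⟩ := hex
  refine hUbad a (W a) (Set.sep_subset _ _) ?_ hWcov
  have hsurj : Function.Surjective (fun x : ∀ j, X j => x (g a)) :=
    Function.surjective_eval (g a)
  have hinj : Function.Injective
      (fun u : Set (X (g a)) => (fun x : ∀ j, X j => x (g a)) ⁻¹' u) :=
    fun u v h => hsurj.preimage_injective h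
  calc #(W a) ≤ #(V a) := by
        refine Cardinal.mk_le_of_injective (f := fun u : W a =>
          (⟨(fun x : ∀ j, X j => x (g a)) ⁻¹' u.1, u.2.2⟩ : V a)) ?_
        intro u v h
        exact Subtype.ext (hinj (congrArg Subtype.val h))
    _ < kappa := hVcard a
end

section
/- Let n ∈ ω and let μ be a cardinal with μ ≥ ℵ_{n+1}. If a product X = ∏_{j∈J} X_j of nonempty topological spaces satisfies R(ℵ_{n+1},μ;<ℵ_{n+1}) (i.e., every ℵ_{n+1}-indexed sequence of open covers of cardinality ≤ μ admits subfamilies of cardinality ≤ ℵ_n whose union is a cover), then the set {j ∈ J : X_j is not initially μ-compact} has cardinality at most ℵ_n. -/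
open Cardinal Set Filter

universe u

/-- A space is initially `μ`-compact if every open cover of cardinality `≤ mu` has a
finite subcover. -/
def InitiallyMuCompact (X : Type u) [TopologicalSpace X] (mu : Cardinal.{u}) : Prop :=
  ∀ U : Set (Set X), (∀ u ∈ U, IsOpen u) → ⋃₀ U = Set.univ → #U ≤ mu →
    ∃ V ⊆ U, V.Finite ∧ ⋃₀ V = Set.univ

/-!
If `X j` is not initially `μ`-compact, the least size `κ ≤ μ` of an open cover of `X j` without
finite subcover is regular, and the increasing unions of such a cover, enumerated in type `κ`,
pull back to a *scale* on the product: an increasing open cover of type `κ` by proper sets that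
depend only on the coordinate `j`. Pairing `κ⁺` scales of type `κ` that live on disjoint sets of
coordinates produces one scale of type `κ⁺` on their union. If more than `ℵ_n` factors were bad,
then `ℵ_{n+1}` of them carry scales of one type `ℵ_k` with `k ≤ n`, which can be bootstrapped up
to `ℵ_{n+1}`, or `ℵ_{n+1}` of them carry scales of type at least `ℵ_{n+1}`. Either way there are
`ℵ_{n+1}` scales of regular type in `[ℵ_{n+1}, μ]` on disjoint sets of coordinates. Fewer than
`ℵ_{n+1}` members of such a scale lie inside a single proper member, and since the coordinate
sets are disjoint, some point avoids one proper member of each scale: this contradicts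
`R(ℵ_{n+1}, μ; <ℵ_{n+1})`.
-/

open Function Order

lemma exists_injOn_of_mk_le {α β : Type u} [Nonempty β] {s : Set α} (h : #s ≤ #β) :
    ∃ f : α → β, InjOn f s :=
  exists_injOn_iff_injective.mpr <| let ⟨e⟩ := (le_def _ _).mp h; ⟨e, e.injective⟩

namespace Cardinal

variable {κ : Cardinal.{u}}

lemma mk_Iio_ord_toType_lt (x : κ.ord.ToType) : #(Iio x) < κ := by
  simpa using mk_Iio_lt x

lemma mk_Iic_ord_toType_lt (hκ : ℵ₀ ≤ κ) (x : κ.ord.ToType) : #(Iic x) < κ := by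
  have := Cardinal.noMaxOrder hκ
  obtain ⟨y, hy⟩ := exists_gt x
  exact (mk_le_mk_of_subset (Iic_subset_Iio.mpr hy)).trans_lt (mk_Iio_ord_toType_lt y)

lemma IsRegular.exists_forall_lt_of_mk_lt (hκ : κ.IsRegular) {S : Set κ.ord.ToType}
    (hS : #S < κ) : ∃ b, ∀ s ∈ S, s < b :=
  not_isCofinal_iff.mp fun hcof => (Order.cof_le hcof).not_gt <| by
    rwa [Ordinal.cof_toType, hκ.cof_ord]

lemma exists_mem_le_mk_inter_Iio (hκ : ℵ₀ ≤ κ) {F : Set (succ κ).ord.ToType}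
    (hF : succ κ ≤ #F) : ∃ j ∈ F, κ ≤ #↑(F ∩ Iio j) := by
  obtain ⟨S, hSF, hS⟩ := le_mk_iff_exists_subset.mp ((le_succ κ).trans hF)
  obtain ⟨b, hb⟩ := (isRegular_succ hκ).exists_forall_lt_of_mk_lt (hS.trans_lt (lt_succ κ))
  obtain ⟨j, hjF, hbj⟩ : ∃ j ∈ F, b ≤ j := by
    by_contra! h
    have hFb : #F ≤ κ := lt_succ_iff.mp ((mk_le_mk_of_subset h).trans_lt (mk_Iio_ord_toType_lt b))
    exact (hF.trans hFb).not_gt (lt_succ κ)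
  refine ⟨j, hjF, hS.symm.le.trans (mk_le_mk_of_subset fun s hs => ?_)⟩
  exact ⟨hSF hs, (hb s hs).trans_le hbj⟩

lemma isRegular_aleph_natCast (m : ℕ) : (ℵ_ m).IsRegular := by
  cases m with
  | zero => simpa using isRegular_aleph0
  | succ m => simpa using isRegular_aleph_add_one m

lemma exists_nat_le_eq_aleph_of_lt {c : Cardinal} (hc : ℵ₀ ≤ c) {n : ℕ}
    (h : c < ℵ_ (n + 1)) : ∃ k ≤ n, c = ℵ_ k := by
  obtain ⟨o, rfl⟩ := mem_range_aleph_iff.mpr hc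
  have ho : o < ((n + 1 : ℕ) : Ordinal) := by exact_mod_cast aleph_lt_aleph.mp h
  obtain ⟨k, rfl⟩ := Ordinal.lt_omega0.mp (ho.trans (Ordinal.natCast_lt_omega0 _))
  exact ⟨k, by exact_mod_cast Nat.lt_succ_iff.mp (by exact_mod_cast ho), rfl⟩

lemma aleph_add_one_le_mk_fiber {n : ℕ} {S : Type u} (f : S → Cardinal.{u})
    (hf : ∀ s, ℵ₀ ≤ f s) (hS : ℵ_ (n + 1) ≤ #S) :
    ℵ_ (n + 1) ≤ #{s | ℵ_ (n + 1) ≤ f s} ∨ ∃ k ≤ n, ℵ_ (n + 1) ≤ #{s | f s = ℵ_ k} := by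
  by_contra! h
  obtain ⟨hlarge, hsmall⟩ := h
  have hcover : (Set.univ : Set S) ⊆ {s | ℵ_ (n + 1) ≤ f s} ∪
      ⋃ k : ULift.{u} (Fin (n + 1)), {s | f s = ℵ_ (k.down : ℕ)} := by
    intro s _
    rcases le_or_gt (ℵ_ (n + 1)) (f s) with hs | hs
    · exact Or.inl hs
    · obtain ⟨k, hk, hks⟩ := exists_nat_le_eq_aleph_of_lt (hf s) hs
      exact Or.inr (mem_iUnion.mpr ⟨⟨k, by omega⟩, hks⟩)
  have hreg := isRegular_aleph_add_one (n : Ordinal)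
  refine (hS.trans_eq mk_univ.symm).not_gt ((mk_le_mk_of_subset hcover).trans_lt
    ((mk_union_le _ _).trans_lt (add_lt_of_lt hreg.aleph0_le hlarge ?_)))
  refine (card_iUnion_lt_iff_forall_of_isRegular hreg ?_).mpr fun k => hsmall k.down (by omega)
  simpa using (natCast_lt_aleph0 (n := n + 1)).trans_le (aleph0_le_aleph _)

/-- Charge each pair to the endpoint with the larger `ψ`-value, for some `ψ` injective on the
endpoints: every point is charged with fewer than `κ` pairs, so a bound `β t` exists for them. -/
lemma IsRegular.exists_bound_fst_or_snd (hκ : κ.IsRegular) {I : Type u} {P : Set (I × I)}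
    (hP : #P ≤ κ) (c : I × I → κ.ord.ToType) :
    ∃ β : I → κ.ord.ToType, ∀ p ∈ P, c p < β p.1 ∨ c p < β p.2 := by
  set T := Prod.fst '' P ∪ Prod.snd '' P
  have hT : #T ≤ #κ.ord.ToType := by
    rw [mk_ord_toType]
    calc #T ≤ #(Prod.fst '' P) + #(Prod.snd '' P) := mk_union_le _ _
      _ ≤ κ + κ := add_le_add (mk_image_le.trans hP) (mk_image_le.trans hP)
      _ = κ := add_eq_self hκ.aleph0_le
  have := nonempty_ord_toType hκ.ne_zero
  obtain ⟨ψ, hψ⟩ := exists_injOn_of_mk_le hT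
  let A : I → Set (I × I) := fun t => {p ∈ P | p.1 = t ∧ ψ p.2 ≤ ψ t ∨ p.2 = t ∧ ψ p.1 ≤ ψ t}
  have hA : ∀ t, #(c '' A t) < κ := by
    intro t
    set D := T ∩ ψ ⁻¹' Iic (ψ t)
    have hD : #D < κ := by
      rw [← mk_image_eq_of_injOn ψ D (hψ.mono inter_subset_left)]
      exact (mk_le_mk_of_subset (image_subset_iff.mpr inter_subset_right)).trans_lt
        (mk_Iic_ord_toType_lt hκ.aleph0_le _)
    have hAD : A t ⊆ (fun s => (t, s)) '' D ∪ (fun s => (s, t)) '' D := by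
      rintro ⟨p₁, p₂⟩ ⟨hp, ⟨rfl, h⟩ | ⟨rfl, h⟩⟩
      · exact Or.inl ⟨p₂, ⟨Or.inr ⟨_, hp, rfl⟩, h⟩, rfl⟩
      · exact Or.inr ⟨p₁, ⟨Or.inl ⟨_, hp, rfl⟩, h⟩, rfl⟩
    calc #(c '' A t) ≤ #(A t) := mk_image_le
      _ ≤ #D + #D := (mk_le_mk_of_subset hAD).trans
          ((mk_union_le _ _).trans (add_le_add mk_image_le mk_image_le))
      _ < κ := add_lt_of_lt hκ.aleph0_le hD hD
  choose β hβ using fun t => hκ.exists_forall_lt_of_mk_lt (hA t)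
  refine ⟨β, fun p hp => ?_⟩
  rcases le_total (ψ p.2) (ψ p.1) with h | h
  · exact Or.inl (hβ _ _ ⟨p, ⟨hp, Or.inl ⟨rfl, h⟩⟩, rfl⟩)
  · exact Or.inr (hβ _ _ ⟨p, ⟨hp, Or.inr ⟨rfl, h⟩⟩, rfl⟩)

end Cardinal

section Monotone

variable {Y : Type u} {W : Type*} [Preorder W] {u : W → Set Y}

lemma Monotone.sUnion_subset_of_subset_image (hu : Monotone u) {S : Set W} {b : W}
    (hb : b ∈ upperBounds S) {V : Set (Set Y)} (hV : V ⊆ u '' S) : ⋃₀ V ⊆ u b := by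
  rintro y ⟨_, hv, hy⟩
  obtain ⟨w, hw, rfl⟩ := hV hv
  exact hu (hb hw) hy

lemma Monotone.exists_sUnion_subset_of_finite [IsDirectedOrder W] [Nonempty W]
    (hu : Monotone u) {V : Set (Set Y)} (hV : V ⊆ range u) (hfin : V.Finite) :
    ∃ b, ⋃₀ V ⊆ u b := by
  obtain ⟨S, rfl, hinj⟩ := exists_image_eq_injOn_of_subset_range hV
  obtain ⟨b, hb⟩ := (hfin.of_finite_image hinj).bddAbove
  exact ⟨b, hu.sUnion_subset_of_subset_image hb subset_rfl⟩

lemma Monotone.exists_sUnion_subset_of_mk_lt {κ : Cardinal.{u}} (hκ : κ.IsRegular)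
    {u : κ.ord.ToType → Set Y} (hu : Monotone u) {V : Set (Set Y)} (hV : V ⊆ range u)
    (hVκ : #V < κ) : ∃ b, ⋃₀ V ⊆ u b := by
  obtain ⟨S, rfl, hinj⟩ := exists_image_eq_injOn_of_subset_range hV
  rw [mk_image_eq_of_injOn _ _ hinj] at hVκ
  obtain ⟨b, hb⟩ := hκ.exists_forall_lt_of_mk_lt hVκ
  exact ⟨b, hu.sUnion_subset_of_subset_image (fun s hs => (hb s hs).le) subset_rfl⟩

end Monotone

section Scale

variable {Y : Type u} [TopologicalSpace Y] {W : Type*} [Preorder W]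

structure IsScale (u : W → Set Y) : Prop where
  isOpen : ∀ w, IsOpen (u w)
  monotone : Monotone u
  iUnion_eq : ⋃ w, u w = Set.univ
  ne_univ : ∀ w, u w ≠ Set.univ

lemma IsScale.preimage {Z : Type*} [TopologicalSpace Z] {u : W → Set Y} (hu : IsScale u)
    {f : Z → Y} (hf : Continuous f) (hsurj : Surjective f) : IsScale fun w => f ⁻¹' u w where
  isOpen w := (hu.isOpen w).preimage hf
  monotone _ _ h := preimage_mono (hu.monotone h)
  iUnion_eq := by rw [← preimage_iUnion, hu.iUnion_eq, preimage_univ]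
  ne_univ w h := hu.ne_univ w <| by
    rw [← image_preimage_eq (u w) hsurj, h, image_univ_of_surjective hsurj]

/-- The least size `κ` of an open cover without finite subcover is regular: the increasing unions
of an enumeration of such a cover in type `κ` form a scale, and a cofinal subfamily of this scale
is again an open cover without finite subcover. -/
lemma exists_isScale_of_not_initiallyMuCompact {mu : Cardinal.{u}} (h : ¬ InitiallyMuCompact Y mu) :
    ∃ κ : Cardinal.{u}, κ.IsRegular ∧ κ ≤ mu ∧ ∃ u : κ.ord.ToType → Set Y, IsScale u := by
  set κ := sInf {c | ¬ InitiallyMuCompact Y c}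
  have hsmall : ∀ U : Set (Set Y), (∀ s ∈ U, IsOpen s) → ⋃₀ U = Set.univ → #U < κ →
      ∃ V ⊆ U, V.Finite ∧ ⋃₀ V = Set.univ :=
    fun U hU hcov hUκ => not_not.mp (notMem_of_lt_csInf' hUκ) U hU hcov le_rfl
  obtain ⟨W, hWopen, hWcov, hWκ, hWbad⟩ : ∃ W : Set (Set Y), (∀ s ∈ W, IsOpen s) ∧
      ⋃₀ W = Set.univ ∧ #W ≤ κ ∧ ∀ V ⊆ W, V.Finite → ⋃₀ V ≠ Set.univ := by
    have hκ : ¬ InitiallyMuCompact Y κ := csInf_mem (s := {c | ¬ InitiallyMuCompact Y c}) ⟨mu, h⟩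
    simpa [InitiallyMuCompact] using hκ
  have hκ0 : ℵ₀ ≤ κ := by
    by_contra! hlt
    exact hWbad W subset_rfl (lt_aleph0_iff_set_finite.mp (hWκ.trans_lt hlt)) hWcov
  obtain ⟨g⟩ : Nonempty (W ↪ κ.ord.ToType) := (le_def _ _).mp (by rwa [mk_ord_toType])
  let v : κ.ord.ToType → Set Y := fun w => ⋃₀ (Subtype.val '' (g ⁻¹' Iic w))
  have hv : IsScale v :=
    { isOpen := fun w => isOpen_sUnion <| by rintro _ ⟨s, -, rfl⟩; exact hWopen s s.2
      monotone := fun w w' h => sUnion_mono (image_mono (preimage_mono (Iic_subset_Iic.mpr h)))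
      iUnion_eq := by
        refine eq_univ_of_forall fun y => ?_
        obtain ⟨s, hs, hys⟩ := hWcov ▸ mem_univ y
        exact mem_iUnion.mpr ⟨g ⟨s, hs⟩, s, ⟨⟨s, hs⟩, le_refl (g ⟨s, hs⟩), rfl⟩, hys⟩
      ne_univ := fun w hw => by
        obtain ⟨V, hVW, hVfin, hVcov⟩ := hsmall _ (by rintro _ ⟨s, -, rfl⟩; exact hWopen s s.2) hw
          (mk_image_le.trans_lt ((mk_preimage_of_injective _ _ g.injective).trans_lt
            (mk_Iic_ord_toType_lt hκ0 w)))
        exact hWbad V (hVW.trans (by rintro _ ⟨s, -, rfl⟩; exact s.2)) hVfin hVcov }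
  refine ⟨κ, ⟨hκ0, ?_⟩, csInf_le' h, v, hv⟩
  by_contra! hcof
  obtain ⟨S, hS, hSκ⟩ := Order.exists_cof_eq κ.ord.ToType
  rw [Ordinal.cof_toType] at hSκ
  have hScov : ⋃₀ (v '' S) = Set.univ := by
    refine eq_univ_of_forall fun y => ?_
    obtain ⟨w, hyw⟩ := mem_iUnion.mp (hv.iUnion_eq ▸ mem_univ y)
    obtain ⟨s, hsS, hws⟩ := hS w
    exact ⟨v s, mem_image_of_mem v hsS, hv.monotone hws hyw⟩
  obtain ⟨V, hVS, hVfin, hVcov⟩ := hsmall _ (by rintro _ ⟨w, -, rfl⟩; exact hv.isOpen w) hScov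
    (mk_image_le.trans_lt (hSκ ▸ hcof))
  have := nonempty_ord_toType (aleph0_pos.trans_le hκ0).ne'
  obtain ⟨b, hb⟩ :=
    hv.monotone.exists_sUnion_subset_of_finite (hVS.trans (image_subset_range _ _)) hVfin
  exact hv.ne_univ b (univ_subset_iff.mp (hVcov ▸ hb))

/-- Some `ξ` has `κ⁺` many `i` with `y ∈ u i ξ`; among them pick `j` with `κ` many `i < j`.
As `c · j` is injective on these `i`, some `c i j` is at least `ξ`. -/
lemma exists_mem_inter_of_injOn {κ : Cardinal.{u}} (hκ : ℵ₀ ≤ κ)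
    {u : (succ κ).ord.ToType → κ.ord.ToType → Set Y}
    (hu : ∀ i, IsScale (u i)) {c : (succ κ).ord.ToType → (succ κ).ord.ToType → κ.ord.ToType}
    (hc : ∀ j, InjOn (c · j) (Iio j)) (y : Y) : ∃ i j, y ∈ u i (c i j) ∩ u j (c i j) := by
  choose h hh using fun i => mem_iUnion.mp ((hu i).iUnion_eq ▸ mem_univ y)
  obtain ⟨ξ, hξ⟩ := infinite_pigeonhole_card h (succ κ) (mk_ord_toType _).ge
    (hκ.trans (le_succ κ)) (by rw [mk_ord_toType, (isRegular_succ hκ).cof_ord]; exact lt_succ κ)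
  obtain ⟨j, hj, hjκ⟩ := exists_mem_le_mk_inter_Iio hκ hξ
  obtain ⟨i, ⟨hi, -⟩, hξi⟩ : ∃ i ∈ h ⁻¹' {ξ} ∩ Iio j, ξ ≤ c i j := by
    by_contra! hlt
    refine hjκ.not_gt ?_
    rw [← mk_image_eq_of_injOn _ _ ((hc j).mono inter_subset_right)]
    exact (mk_le_mk_of_subset (t := Iio ξ) (image_subset_iff.mpr fun i hi => hlt i hi)).trans_lt
      (mk_Iio_ord_toType_lt ξ)
  refine ⟨i, j, (hu i).monotone hξi ?_, (hu j).monotone hξi ?_⟩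
  · exact (mem_singleton_iff.mp hi) ▸ hh i
  · exact (mem_singleton_iff.mp hj) ▸ hh j

end Scale

section Product

variable {J : Type u} {X : J → Type u}

lemma dependsOn_mem_inter {B : Set J} {s t : Set (∀ j, X j)} (hs : DependsOn (· ∈ s) B)
    (ht : DependsOn (· ∈ t) B) : DependsOn (· ∈ s ∩ t) B :=
  fun _ _ h => congrArg₂ And (hs h) (ht h)

lemma dependsOn_mem_iUnion {ι : Sort*} {B : Set J} {s : ι → Set (∀ j, X j)}
    (hs : ∀ i, DependsOn (· ∈ s i) B) : DependsOn (· ∈ ⋃ i, s i) B :=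
  fun _ _ h => propext <| by simp only [mem_iUnion, fun i => (hs i h).to_iff]

lemma exists_forall_notMem_of_pairwise_disjoint [∀ j, Nonempty (X j)] {T : Type*}
    {B : T → Set J} (hB : Pairwise (Disjoint on B)) {s : T → Set (∀ j, X j)}
    (hs : ∀ t, DependsOn (· ∈ s t) (B t)) (hne : ∀ t, s t ≠ Set.univ) :
    ∃ x, ∀ t, x ∉ s t := by
  classical
  choose z hz using fun t => (ne_univ_iff_exists_notMem (s t)).mp (hne t)
  let x : ∀ j, X j := fun j =>
    if h : ∃ t, j ∈ B t then z h.choose j else Classical.arbitrary _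
  refine ⟨x, fun t hxt => hz t (Eq.mp (hs t fun j hj => ?_) hxt)⟩
  have h : ∃ t, j ∈ B t := ⟨t, hj⟩
  have ht : h.choose = t := hB.eq (not_disjoint_iff.mpr ⟨j, h.choose_spec, hj⟩)
  simp only [x, dif_pos h, ht]

lemma Function.Injective.pairwise_disjoint_singleton {I : Type*} {f : I → J} (hf : Injective f) :
    Pairwise (Disjoint on fun i => ({f i} : Set J)) :=
  fun _ _ h => disjoint_singleton.mpr (hf.ne h)

variable [∀ j, TopologicalSpace (X j)] [∀ j, Nonempty (X j)]

structure IsScaleOn {W : Type*} [Preorder W] (B : Set J) (u : W → Set (∀ j, X j)) : Prop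
    extends IsScale u where
  dependsOn : ∀ w, DependsOn (· ∈ u w) B

lemma exists_isScaleOn_singleton_of_not_initiallyMuCompact {mu : Cardinal.{u}} {j : J}
    (h : ¬ InitiallyMuCompact (X j) mu) :
    ∃ κ : Cardinal.{u}, κ.IsRegular ∧ κ ≤ mu ∧
      ∃ u : κ.ord.ToType → Set (∀ j, X j), IsScaleOn {j} u := by
  obtain ⟨κ, hκ, hκμ, u, hu⟩ := exists_isScale_of_not_initiallyMuCompact h
  refine ⟨κ, hκ, hκμ, _, ⟨hu.preimage (continuous_apply j) (surjective_eval j), ?_⟩⟩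
  intro w x y hxy
  simp only [mem_preimage, hxy j rfl]

/-- `U ζ` is the union of `u i (c i j) ∩ u j (c i j)` over the pairs `(i, j)` coded below `ζ`,
where `c · j` injects `Iio j` into `κ`. -/
lemma exists_isScaleOn_iUnion {κ : Cardinal.{u}} (hκ : κ.IsRegular)
    {B : (succ κ).ord.ToType → Set J} (hB : Pairwise (Disjoint on B))
    {u : (succ κ).ord.ToType → κ.ord.ToType → Set (∀ j, X j)}
    (hu : ∀ i, IsScaleOn (B i) (u i)) :
    ∃ U : (succ κ).ord.ToType → Set (∀ j, X j), IsScaleOn (⋃ i, B i) U := by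
  have hIio : ∀ j : (succ κ).ord.ToType, #(Iio j) ≤ κ := fun j =>
    lt_succ_iff.mp (mk_Iio_ord_toType_lt j)
  have := nonempty_ord_toType hκ.ne_zero
  choose c hc using fun j => exists_injOn_of_mk_le ((hIio j).trans (mk_ord_toType κ).ge)
  obtain ⟨code⟩ : Nonempty ((succ κ).ord.ToType × (succ κ).ord.ToType ↪ (succ κ).ord.ToType) :=
    (le_def _ _).mp <| by
      rw [mk_prod, lift_id, mul_eq_self (by simpa using hκ.aleph0_le.trans (le_succ κ))]
  let C : (succ κ).ord.ToType × (succ κ).ord.ToType → Set (∀ j, X j) :=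
    fun p => u p.1 (c p.2 p.1) ∩ u p.2 (c p.2 p.1)
  refine ⟨fun ζ => ⋃ p ∈ code ⁻¹' Iio ζ, C p,
    { isOpen := fun ζ => isOpen_biUnion fun p _ => ((hu _).isOpen _).inter ((hu _).isOpen _)
      monotone := fun ζ ζ' h => biUnion_subset_biUnion_left fun p hp => lt_of_lt_of_le hp h
      iUnion_eq := ?_
      ne_univ := fun ζ hζ => ?_
      dependsOn := fun ζ => dependsOn_mem_iUnion fun p => dependsOn_mem_iUnion fun _ =>
        dependsOn_mem_inter (((hu _).dependsOn _).mono (subset_iUnion B p.1))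
          (((hu _).dependsOn _).mono (subset_iUnion B p.2)) }⟩
  · refine eq_univ_of_forall fun y => ?_
    obtain ⟨i, j, hy⟩ := exists_mem_inter_of_injOn hκ.aleph0_le (fun i => (hu i).toIsScale)
      (fun j => hc j) y
    have := noMaxOrder (hκ.aleph0_le.trans (le_succ κ))
    obtain ⟨ζ, hζ⟩ := exists_gt (code (i, j))
    exact mem_iUnion.mpr ⟨ζ, mem_iUnion₂.mpr ⟨(i, j), hζ, hy⟩⟩
  · obtain ⟨β, hβ⟩ := hκ.exists_bound_fst_or_snd (P := code ⁻¹' Iio ζ)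
      ((mk_preimage_of_injective _ _ code.injective).trans (hIio ζ)) fun p => c p.2 p.1
    obtain ⟨y, hy⟩ := exists_forall_notMem_of_pairwise_disjoint hB
      (fun i => (hu i).dependsOn (β i)) fun i => (hu i).ne_univ (β i)
    obtain ⟨p, hp, hyp⟩ := mem_iUnion₂.mp (hζ ▸ mem_univ y)
    rcases hβ p hp with h | h
    · exact hy p.1 ((hu p.1).monotone h.le hyp.1)
    · exact hy p.2 ((hu p.2).monotone h.le hyp.2)

variable (X) in
def HasDisjointScales (I : Type u) (κ : Cardinal.{u}) : Prop :=
  ∃ B : I → Set J, Pairwise (Disjoint on B) ∧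
    ∀ i, ∃ u : κ.ord.ToType → Set (∀ j, X j), IsScaleOn (B i) u

/-- Split the index type as `I × κ⁺` and merge each group of `κ⁺` scales. -/
lemma HasDisjointScales.to_succ {I : Type u} {κ : Cardinal.{u}} (h : HasDisjointScales X I κ)
    (hκ : κ.IsRegular) (hI : succ κ ≤ #I) : HasDisjointScales X I (succ κ) := by
  obtain ⟨B, hB, hu⟩ := h
  choose u hu using hu
  obtain ⟨e⟩ : Nonempty (I ≃ I × (succ κ).ord.ToType) := by
    rw [← Cardinal.eq, mk_prod, lift_id, lift_id, mk_ord_toType,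
      mul_eq_left (hκ.aleph0_le.trans ((le_succ κ).trans hI)) hI (succ_ne_bot κ)]
  refine ⟨fun i => ⋃ ξ, B (e.symm (i, ξ)), fun i i' hii' => ?_, fun i => ?_⟩
  · refine disjoint_iUnion_left.mpr fun ξ => disjoint_iUnion_right.mpr fun ξ' => hB ?_
    exact e.symm.injective.ne fun h => hii' (congrArg Prod.fst h)
  · refine exists_isScaleOn_iUnion hκ (fun ξ ξ' hξ => hB ?_) fun ξ => hu (e.symm (i, ξ))
    exact e.symm.injective.ne fun h => hξ (congrArg Prod.snd h)

lemma HasDisjointScales.aleph_of_le {I : Type u} {k m : ℕ} (h : HasDisjointScales X I (ℵ_ k))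
    (hkm : k ≤ m) (hI : ℵ_ m ≤ #I) : HasDisjointScales X I (ℵ_ m) := by
  induction m, hkm using Nat.le_induction with
  | base => exact h
  | succ m _ ih =>
    rw [Nat.cast_succ, ← succ_aleph] at hI ⊢
    exact (ih ((le_succ _).trans hI)).to_succ (isRegular_aleph_natCast m) hI

/-- Each cover `range (u a)` only admits subfamilies of size `< kappa ≤ c a`, which lie inside a
single proper member `u a (b a)`; a point outside all `u a (b a)` is left uncovered. -/
lemma not_satisfiesR_of_pairwise_disjoint {L : Type u} {mu kappa : Cardinal.{u}}
    (hR : SatisfiesR (∀ j, X j) L mu kappa) {B : L → Set J} (hB : Pairwise (Disjoint on B))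
    (hu : ∀ a, ∃ c : Cardinal.{u}, c.IsRegular ∧ kappa ≤ c ∧ c ≤ mu ∧
      ∃ u : c.ord.ToType → Set (∀ j, X j), IsScaleOn (B a) u) : False := by
  choose c hc hkc hcmu u hu using hu
  obtain ⟨V, hVu, hVκ, hVcov⟩ := hR (fun a => range (u a))
    (by rintro a _ ⟨w, rfl⟩; exact (hu a).isOpen w) (fun a => sUnion_range _ ▸ (hu a).iUnion_eq)
    fun a => mk_range_le.trans ((mk_ord_toType _).trans_le (hcmu a))
  choose b hb using fun a =>
    (hu a).monotone.exists_sUnion_subset_of_mk_lt (hc a) (hVu a) ((hVκ a).trans_le (hkc a))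
  obtain ⟨x, hx⟩ := exists_forall_notMem_of_pairwise_disjoint hB
    (fun a => (hu a).dependsOn (b a)) fun a => (hu a).ne_univ (b a)
  obtain ⟨v, hv, hxv⟩ := hVcov ▸ mem_univ x
  obtain ⟨a, hva⟩ := mem_iUnion.mp hv
  exact hx a (hb a ⟨v, hva, hxv⟩)

end Product

/-- Corollary 2.4: let `n ∈ ω` and `μ ≥ ℵ_{n+1}`. If a product of nonempty spaces
satisfies `R(ℵ_{n+1},μ;<ℵ_{n+1})` (here `L` is an index type of cardinality `ℵ_{n+1}`),
then at most `ℵ_n` of the factors fail to be initially `μ`-compact. -/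
theorem stmt14 (n : ℕ) (L : Type u) (hL : #L = Cardinal.aleph (n + 1))
    (mu : Cardinal.{u}) (hmu : Cardinal.aleph (n + 1) ≤ mu)
    (J : Type u) (X : J → Type u) [∀ j, TopologicalSpace (X j)] [∀ j, Nonempty (X j)]
    (hR : SatisfiesR (∀ j, X j) L mu (Cardinal.aleph (n + 1))) :
    #{j : J | ¬ InitiallyMuCompact (X j) mu} ≤ Cardinal.aleph n := by
  by_contra! hbig
  choose κ hκ hκmu u hu using fun j : {j : J | ¬ InitiallyMuCompact (X j) mu} =>
    exists_isScaleOn_singleton_of_not_initiallyMuCompact j.2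
  rcases aleph_add_one_le_mk_fiber κ (fun j => (hκ j).aleph0_le)
    (by rw [← succ_aleph]; exact succ_le_of_lt hbig) with hlarge | ⟨k, hkn, hk⟩
  · obtain ⟨e⟩ := (le_def _ _).mp (hL.trans_le hlarge)
    have he : Injective fun a => ((e a : _) : J) :=
      Subtype.val_injective.comp (Subtype.val_injective.comp e.injective)
    refine not_satisfiesR_of_pairwise_disjoint hR he.pairwise_disjoint_singleton fun a => ?_
    exact ⟨κ (e a), hκ _, (e a).2, hκmu _, u _, hu _⟩
  · obtain ⟨e⟩ := (le_def _ _).mp (hL.trans_le hk)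
    have he : Injective fun a => ((e a : _) : J) :=
      Subtype.val_injective.comp (Subtype.val_injective.comp e.injective)
    have hscale j (hj : κ j = ℵ_ k) :
        ∃ u : (ℵ_ k).ord.ToType → Set (∀ j, X j), IsScaleOn {(j : J)} u :=
      hj ▸ ⟨u j, hu j⟩
    obtain ⟨B, hB, hu'⟩ : HasDisjointScales X L (ℵ_ (n + 1)) := by
      have hk : HasDisjointScales X L (ℵ_ k) :=
        ⟨_, he.pairwise_disjoint_singleton, fun a => hscale _ (e a).2⟩
      exact_mod_cast hk.aleph_of_le (m := n + 1) (by omega) (by exact_mod_cast hL.ge)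
    refine not_satisfiesR_of_pairwise_disjoint hR hB fun a => ?_
    exact ⟨ℵ_ (n + 1), isRegular_aleph_add_one n, le_rfl, hmu, hu' a⟩
end

section
/- Let λ be a nonzero cardinal. If for every α ∈ λ, X_α is a nonempty topological space which is not ultraconnected, then the product X = ∏_{α∈λ} X_α does not satisfy R(λ,2;1), i.e., there is a λ-indexed sequence (𝒰_α)_{α∈λ} of open covers of X, each consisting of at most 2 sets, such that for every choice of one member U_α ∈ 𝒰_α for each α ∈ λ, the family {U_α : α ∈ λ} is not a cover of X. -/
open Cardinal Set

universe u

/-- A topological space is ultraconnected if it contains no pair of disjoint nonempty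
closed sets. -/
def Ultraconnected (X : Type u) [TopologicalSpace X] : Prop :=
  ¬ ∃ C D : Set X, IsClosed C ∧ IsClosed D ∧ C.Nonempty ∧ D.Nonempty ∧ C ∩ D = ∅

/-- Corollary 4.2, first part: if each `X a` (`a` ranging over the nonzero cardinal
`λ = #L`) is a nonempty space which is not ultraconnected, then `∏ a, X a` does not
satisfy `R(λ,2;1)`: there is a `λ`-indexed sequence of open covers, each with at most two
members, such that no choice of one member from each cover yields a cover. -/
theorem stmt17 (L : Type u) [Nonempty L]
    (X : L → Type u) [∀ a, TopologicalSpace (X a)] [∀ a, Nonempty (X a)]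
    (h : ∀ a, ¬ Ultraconnected (X a)) :
    ∃ U : L → Set (Set (∀ a, X a)),
      (∀ a, ∀ u ∈ U a, IsOpen u) ∧
      (∀ a, ⋃₀ U a = Set.univ) ∧
      (∀ a, #(U a) ≤ 2) ∧
      ∀ c : (a : L) → Set (∀ a, X a),
        (∀ a, c a ∈ U a) → (⋃ a, c a) ≠ Set.univ := by
  classical
  have h' : ∀ a, ∃ C D : Set (X a), IsClosed C ∧ IsClosed D ∧ C.Nonempty ∧ D.Nonempty ∧
      C ∩ D = ∅ := fun a => not_not.mp (h a)
  choose C D hC hD hCne hDne hCD using h'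
  refine ⟨fun a => {(fun f => f a) ⁻¹' (C a)ᶜ, (fun f => f a) ⁻¹' (D a)ᶜ}, ?_, ?_, ?_, ?_⟩
  · rintro a u (rfl | rfl)
    · exact (hC a).isOpen_compl.preimage (continuous_apply a)
    · exact (hD a).isOpen_compl.preimage (continuous_apply a)
  · intro a
    ext f
    simp only [mem_sUnion, mem_univ, iff_true]
    by_cases hf : f a ∈ C a
    · refine ⟨_, Or.inr rfl, ?_⟩
      intro hfd
      have : f a ∈ C a ∩ D a := ⟨hf, hfd⟩
      simp [hCD a] at this
    · exact ⟨_, Or.inl rfl, hf⟩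
  · intro a
    calc #({(fun f => f a) ⁻¹' (C a)ᶜ, (fun f => f a) ⁻¹' (D a)ᶜ} : Set (Set (∀ a, X a)))
        ≤ #({(fun f => f a) ⁻¹' (D a)ᶜ} : Set (Set (∀ a, X a))) + 1 :=
          Cardinal.mk_insert_le
      _ ≤ 1 + 1 := by rw [Cardinal.mk_singleton]
      _ = 2 := one_add_one_eq_two
  · intro c hc hcov
    have : ∀ a, ∃ x : X a, (fun f : ∀ a, X a => f a) ⁻¹' {g | g = x} ⊆ (c a)ᶜ := by
      intro a
      rcases hc a with h1 | h1
      · obtain ⟨x, hx⟩ := hCne a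
        refine ⟨x, fun f hf => ?_⟩
        simp only [h1, mem_compl_iff, mem_preimage, not_not]
        rw [show f a = x from hf]; exact hx
      · obtain ⟨x, hx⟩ := hDne a
        rw [mem_singleton_iff] at h1
        refine ⟨x, fun f hf => ?_⟩
        simp only [h1, mem_compl_iff, mem_preimage, not_not]
        rw [show f a = x from hf]; exact hx
    choose x hx using this
    have hxnot : x ∉ ⋃ a, c a := by
      simp only [mem_iUnion, not_exists]
      intro a
      exact hx a rfl
    rw [hcov] at hxnot
    exact hxnot (mem_univ _)
end

section
/- If a product X = ∏_{j∈J} X_j of nonempty topological spaces satisfies the Rothberger property for countable covers (i.e., for every ω-indexed sequence (𝒰_n)_{n∈ω} of countable open covers of X there is a choice of one member U_n ∈ 𝒰_n for each n such that {U_n : n ∈ ω} covers X), then all but finitely many of the factors X_j are ultraconnected. -/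
open Cardinal Set

universe u

/-- The Rothberger property for countable covers: for every `ω`-indexed sequence of
countable open covers one can select one member of each cover so that the selected sets
form a cover. -/
def RothbergerCountable (X : Type u) [TopologicalSpace X] : Prop :=
  ∀ U : ℕ → Set (Set X),
    (∀ n, ∀ u ∈ U n, IsOpen u) →
    (∀ n, ⋃₀ U n = Set.univ) →
    (∀ n, (U n).Countable) →
    ∃ c : ℕ → Set X, (∀ n, c n ∈ U n) ∧ ⋃ n, c n = Set.univ

lemma exists_pi_eq {J : Type u} (X : J → Type u) [∀ j, Nonempty (X j)]
    (f : ℕ → J) (hf : Function.Injective f) (y : ∀ n, X (f n)) :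
    ∃ x : ∀ j, X j, ∀ n, x (f n) = y n := by
  classical
  refine ⟨fun j => if h : ∃ n, f n = j then cast (congrArg X h.choose_spec) (y h.choose)
    else Classical.arbitrary _, fun n => ?_⟩
  have h : ∃ k, f k = f n := ⟨n, rfl⟩
  simp only [dif_pos h]
  have key : ∀ (k n : ℕ) (hk : f k = f n), cast (congrArg X hk) (y k) = y n := by
    intro k n hk
    have : k = n := hf hk
    subst this
    exact cast_eq_iff_heq.mpr HEq.rfl
  exact key h.choose n h.choose_spec

/-- Corollary 4.2, second part: if a product of nonempty spaces satisfies the Rothberger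
property for countable covers, then all but finitely many factors are ultraconnected. -/
theorem stmt18 (J : Type u) (X : J → Type u)
    [∀ j, TopologicalSpace (X j)] [∀ j, Nonempty (X j)]
    (hR : RothbergerCountable (∀ j, X j)) :
    {j : J | ¬ Ultraconnected (X j)}.Finite := by
  classical
  by_contra hinf
  have hinf' : Set.Infinite {j : J | ¬ Ultraconnected (X j)} := hinf
  obtain f := hinf'.natEmbedding
  set g : ℕ → J := fun n => (f n).1 with hg
  have hginj : Function.Injective g := fun a b hab => f.injective (Subtype.ext hab)
  have hprop : ∀ n, ¬ Ultraconnected (X (g n)) := fun n => (f n).2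
  choose C D hC hD hCne hDne hdisj using fun n => not_not.mp (hprop n)
  set A : ℕ → Set (∀ j, X j) := fun n => (fun p => p (g n)) ⁻¹' (C n)ᶜ with hA
  set B : ℕ → Set (∀ j, X j) := fun n => (fun p => p (g n)) ⁻¹' (D n)ᶜ with hB
  obtain ⟨c, hc1, hc2⟩ := hR (fun n => {A n, B n})
    (by
      rintro n u hu
      rcases hu with rfl | rfl
      · exact ((hC n).isOpen_compl).preimage (continuous_apply _)
      · exact ((hD n).isOpen_compl).preimage (continuous_apply _))
    (by
      intro n
      ext p
      simp only [Set.sUnion_insert, Set.sUnion_singleton, Set.mem_union, Set.mem_univ, iff_true]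
      by_cases hp : p (g n) ∈ C n
      · right
        have : p (g n) ∉ D n := by
          intro hd
          have : p (g n) ∈ C n ∩ D n := ⟨hp, hd⟩
          rw [hdisj n] at this
          exact this
        exact this
      · exact Or.inl hp)
    (fun n => ((Set.finite_singleton _).insert _).countable)
  set y : ∀ n, X (g n) := fun n =>
    if c n = A n then (hCne n).some else (hDne n).some with hy
  obtain ⟨x, hx⟩ := exists_pi_eq X g hginj y
  have hxmem : x ∈ ⋃ n, c n := hc2 ▸ Set.mem_univ x
  obtain ⟨n, hn⟩ := Set.mem_iUnion.mp hxmem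
  by_cases h : c n = A n
  · have h1 : x (g n) ∈ C n := by
      rw [hx n, hy]; simp only [if_pos h]; exact (hCne n).some_mem
    rw [h] at hn
    exact hn h1
  · have h2 : c n = B n := (hc1 n).resolve_left h
    have h1 : x (g n) ∈ D n := by
      rw [hx n, hy]; simp only [if_neg h]; exact (hDne n).some_mem
    rw [h2] at hn
    exact hn h1
end
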